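/- arXiv:1504.01629 — 10 statements merged into one kernel-verified Lean document; each statement's English description precedes it below -/
import Mathlib

section
/- Let G be a permutation group on a finite set X. Then G is primitive if and only if the only G-invariant quasiorders (reflexive transitive relations) on X are the identity relation and the universal relation. -/
def IsPrimitivePermGroup {X : Type*} (G : Subgroup (Equiv.Perm X)) : Prop :=
  (∀ x y : X, ∃ g ∈ G, g x = y) ∧
  ∀ R : X → X → Prop, Equivalence R →
    (∀ g ∈ G, ∀ x y : X, R x y → R (g x) (g y)) →
    (∀ x y : X, R x y ↔ x = y) ∨ (∀ x y : X, R x y)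

theorem stmt1 {X : Type*} [Fintype X] (hX : 3 ≤ Fintype.card X)
    (G : Subgroup (Equiv.Perm X)) :
    IsPrimitivePermGroup G ↔
      ∀ R : X → X → Prop, Reflexive R → Transitive R →
        (∀ g ∈ G, ∀ x y : X, R x y → R (g x) (g y)) →
        (∀ x y : X, R x y ↔ x = y) ∨ (∀ x y : X, R x y) := by
  classical
  constructor
  · rintro ⟨htr, heq⟩ R hrefl htrans hinv
    -- symmetrization
    set S : X → X → Prop := fun x y => R x y ∧ R y x with hS
    have hSequiv : Equivalence S := by
      constructor
      · intro x; exact ⟨hrefl x, hrefl x⟩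
      · rintro x y ⟨h1, h2⟩; exact ⟨h2, h1⟩
      · rintro x y z ⟨h1, h2⟩ ⟨h3, h4⟩; exact ⟨htrans h1 h3, htrans h4 h2⟩
    have hSinv : ∀ g ∈ G, ∀ x y : X, S x y → S (g x) (g y) := by
      rintro g hg x y ⟨h1, h2⟩; exact ⟨hinv g hg x y h1, hinv g hg y x h2⟩
    rcases heq S hSequiv hSinv with hid | huniv
    · left
      intro x y
      constructor
      · intro hxy
        obtain ⟨g, hg, hgx⟩ := htr x y
        -- show R y x
        have hstep : ∀ k : ℕ, R ((g ^ k) x) ((g ^ (k + 1)) x) := by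
          intro k
          have := hinv (g ^ k) (pow_mem hg k) x (g x) (by rwa [hgx])
          have h2 : (g ^ k) (g x) = (g ^ (k + 1)) x := by
            rw [pow_succ, Equiv.Perm.mul_apply]
          rwa [h2] at this
        have hchain : ∀ k : ℕ, R (g x) ((g ^ (k + 1)) x) := by
          intro k
          induction k with
          | zero => simpa using hrefl (g x)
          | succ n ih => exact htrans ih (hstep (n + 1))
        obtain ⟨m, hm, hgm⟩ : ∃ m : ℕ, 0 < m ∧ g ^ m = 1 := by
          refine ⟨Fintype.card (Equiv.Perm X), Fintype.card_pos, pow_card_eq_one⟩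
        have hRyx : R y x := by
          obtain ⟨m', rfl⟩ : ∃ m', m = m' + 1 := ⟨m - 1, (Nat.succ_pred_eq_of_pos hm).symm⟩
          have := hchain m'
          rw [hgm] at this
          simpa [hgx] using this
        exact (hid x y).mp ⟨hxy, hRyx⟩
      · rintro rfl; exact hrefl x
    · right
      intro x y; exact (huniv x y).1
  · intro h
    constructor
    · -- transitivity via the orbit quasiorder
      set O : X → X → Prop := fun x y => ∃ g ∈ G, g x = y with hO
      have hOrefl : Reflexive O := fun x => ⟨1, one_mem G, rfl⟩
      have hOtrans : Transitive O := by
        rintro x y z ⟨g, hg, rfl⟩ ⟨g', hg', rfl⟩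
        exact ⟨g' * g, mul_mem hg' hg, rfl⟩
      have hOinv : ∀ g ∈ G, ∀ x y : X, O x y → O (g x) (g y) := by
        rintro k hk x y ⟨g, hg, rfl⟩
        refine ⟨k * g * k⁻¹, mul_mem (mul_mem hk hg) (inv_mem hk), ?_⟩
        simp [Equiv.Perm.mul_apply]
      rcases h O hOrefl hOtrans hOinv with hid | huniv
      · -- G acts trivially; contradiction with card ≥ 3
        exfalso
        have hfix : ∀ g ∈ G, ∀ x : X, g x = x := by
          intro g hg x
          exact ((hid x (g x)).mp ⟨g, hg, rfl⟩).symm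
        have : (1 : ℕ) < Fintype.card X := by omega
        haveI : Nontrivial X := Fintype.one_lt_card_iff_nontrivial.mp this
        obtain ⟨a, b, hab⟩ := exists_pair_ne X
        obtain ⟨c, hca, hcb⟩ : ∃ c : X, c ≠ a ∧ c ≠ b := by
          by_contra hc
          push_neg at hc
          have hsub : (Finset.univ : Finset X) ⊆ {a, b} := by
            intro x _
            rcases eq_or_ne x a with rfl | hxa
            · simp
            · simp [hc x hxa]
          have := Finset.card_le_card hsub
          simp only [Finset.card_univ] at this
          have hle : ({a, b} : Finset X).card ≤ 2 :=
            (Finset.card_insert_le _ _).trans (by simp)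
          omega
        set R : X → X → Prop := fun x y => x = y ∨ (x = a ∧ y = b) with hR
        have hRrefl : Reflexive R := fun x => Or.inl rfl
        have hRtrans : Transitive R := by
          rintro x y z (rfl | ⟨rfl, rfl⟩) (rfl | ⟨rfl, rfl⟩)
          · exact Or.inl rfl
          · exact Or.inr ⟨rfl, rfl⟩
          · exact Or.inr ⟨rfl, rfl⟩
          · exact Or.inr ⟨rfl, rfl⟩
        have hRinv : ∀ g ∈ G, ∀ x y : X, R x y → R (g x) (g y) := by
          intro g hg x y hxy
          rw [hfix g hg x, hfix g hg y]; exact hxy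
        rcases h R hRrefl hRtrans hRinv with hid' | huniv'
        · exact hab ((hid' a b).mp (Or.inr ⟨rfl, rfl⟩))
        · rcases huniv' a c with h1 | ⟨h2, h3⟩
          · exact hca h1.symm
          · exact hcb h3
      · exact fun x y => huniv x y
    · intro R hRe hRinv
      exact h R (fun x => hRe.refl x) (fun _ _ _ h1 h2 => hRe.trans h1 h2) hRinv
end

section
/- Let Γ be a finite graph with clique number r whose automorphism group acts primitively on the vertices. Suppose there are distinct vertices a, b such that every clique of size r containing a also contains b. Then Γ is a complete graph. -/
namespace Equiv.Perm

variable {α : Type*} {Q : α → α → Prop} [IsPreorder α Q] {g : Perm α}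

theorem rel_pow_apply_of_rel_apply (hQ : ∀ x y, Q x y → Q (g x) (g y)) {x : α} (hx : Q x (g x)) :
    ∀ k : ℕ, Q x ((g ^ k) x)
  | 0 => refl x
  | k + 1 => by
    rw [pow_succ', mul_apply]
    exact _root_.trans hx (hQ _ _ (rel_pow_apply_of_rel_apply hQ hx k))

theorem rel_apply_self_of_rel_self_apply (hg : IsOfFinOrder g)
    (hQ : ∀ x y, Q x y → Q (g x) (g y)) {x : α} (hx : Q x (g x)) : Q (g x) x := by
  have h := rel_pow_apply_of_rel_apply hQ (hQ _ _ hx) (orderOf g - 1)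
  rwa [← mul_apply, pow_sub_one_mul hg.orderOf_pos.ne', pow_orderOf_eq_one, one_apply] at h

end Equiv.Perm

namespace SimpleGraph

variable {X Y : Type*}

def NCliqueImplies (Γ : SimpleGraph X) (n : ℕ) (x y : X) : Prop :=
  ∀ s : Finset X, Γ.IsNClique n s → x ∈ s → y ∈ s

instance (Γ : SimpleGraph X) (n : ℕ) : IsPreorder X (Γ.NCliqueImplies n) where
  refl _ _ _ hx := hx
  trans _ _ _ hxy hyz s hs hx := hyz s hs (hxy s hs hx)

variable {Γ : SimpleGraph X} {Δ : SimpleGraph Y} {n : ℕ}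

theorem IsNClique.map_embedding (f : Γ ↪g Δ) {s : Finset X} (hs : Γ.IsNClique n s) :
    Δ.IsNClique n (s.map f.toEmbedding) :=
  hs.map.mono ((map_le_iff_le_comap _ _ _).2 fun _ _ => f.map_rel_iff.2)

theorem NCliqueImplies.map_iso (f : Γ ≃g Δ) {x y : X} (hxy : Γ.NCliqueImplies n x y) :
    Δ.NCliqueImplies n (f x) (f y) := by
  intro t ht hx
  obtain ⟨w, hw, rfl⟩ := Finset.mem_map.1 <|
    hxy _ (ht.map_embedding f.symm.toEmbedding) (Finset.mem_map.2 ⟨f x, hx, f.symm_apply_apply x⟩)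
  simpa using hw

theorem adj_of_forall_nCliqueImplies_cliqueNum [Finite X]
    (hΓ : ∀ x y, Γ.NCliqueImplies Γ.cliqueNum x y) {x y : X} (hxy : x ≠ y) : Γ.Adj x y := by
  obtain ⟨s, hs⟩ := Γ.exists_isNClique_cliqueNum
  have hpos : 0 < Γ.cliqueNum :=
    (isNClique_singleton.2 rfl : Γ.IsNClique 1 {x}).isClique.card_le_cliqueNum
  obtain ⟨z, hz⟩ : s.Nonempty := by rw [← Finset.card_pos, hs.card_eq]; exact hpos
  exact hs.isClique (hΓ z x s hs hz) (hΓ z y s hs hz) hxy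

end SimpleGraph

theorem stmt2 {X : Type*} [Fintype X] (Γ : SimpleGraph X) (r : ℕ)
    (G : Subgroup (Equiv.Perm X))
    (hAut : ∀ g ∈ G, ∀ x y : X, Γ.Adj x y ↔ Γ.Adj (g x) (g y))
    (hPrim : IsPrimitivePermGroup G)
    (hclique : Γ.cliqueNum = r)
    (a b : X) (hab : a ≠ b)
    (h : ∀ s : Finset X, Γ.IsNClique r s → a ∈ s → b ∈ s) :
    ∀ x y : X, x ≠ y → Γ.Adj x y := by
  subst hclique
  set Q := Γ.NCliqueImplies Γ.cliqueNum
  have hQ : ∀ g ∈ G, ∀ x y, Q x y → Q (g x) (g y) := fun g hg _ _ =>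
    SimpleGraph.NCliqueImplies.map_iso ⟨g, (hAut g hg _ _).symm⟩
  have hba : Q b a := by
    obtain ⟨g, hg, rfl⟩ := hPrim.1 a b
    exact Equiv.Perm.rel_apply_self_of_rel_self_apply (isOfFinOrder_of_finite g) (hQ g hg) h
  have hQ_univ : ∀ x y, Q x y := by
    rcases hPrim.2 (AntisymmRel Q) (AntisymmRel.setoid X Q).iseqv
        (fun g hg x y hxy => ⟨hQ g hg x y hxy.1, hQ g hg y x hxy.2⟩) with hdiscrete | hall
    · exact absurd ((hdiscrete a b).1 ⟨h, hba⟩) hab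
    · exact fun x y => (hall x y).1
  exact fun x y => SimpleGraph.adj_of_forall_nCliqueImplies_cliqueNum hQ_univ
end

section
/- Let Γ be a finite non-null graph whose automorphism group acts primitively on the vertices, with chromatic number equal to clique number r. Let x be a vertex, C an r-clique containing x, and y a vertex not in N(x) ∪ {x}. Then (N(x) \ N(y)) ∩ C is nonempty. -/
theorem stmt3 {X : Type*} [Fintype X] (Γ : SimpleGraph X) (r : ℕ)
    (G : Subgroup (Equiv.Perm X))
    (hAut : ∀ g ∈ G, ∀ x y : X, Γ.Adj x y ↔ Γ.Adj (g x) (g y))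
    (hPrim : IsPrimitivePermGroup G)
    (hEdge : ∃ x y : X, Γ.Adj x y)
    (hchrom : Γ.chromaticNumber = (r : ℕ∞))
    (hcl : Γ.cliqueNum = r)
    (x y : X) (C : Finset X) (hC : Γ.IsNClique r C) (hxC : x ∈ C)
    (hy1 : y ≠ x) (hy2 : ¬ Γ.Adj x y) :
    ∃ z ∈ C, Γ.Adj x z ∧ ¬ Γ.Adj y z := by
  by_contra h
  push_neg at h
  -- So every z ∈ C adjacent to x is adjacent to y.
  have hcol : Γ.Colorable r := by
    rw [← Γ.chromaticNumber_le_iff_colorable, hchrom]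
  -- Define the relation: same color in every proper r-coloring.
  set R : X → X → Prop := fun u v => ∀ c : Γ.Coloring (Fin r), c u = c v with hR
  have hEquiv : Equivalence R :=
    ⟨fun _ _ => rfl, fun h c => (h c).symm, fun h1 h2 c => (h1 c).trans (h2 c)⟩
  have hInv : ∀ g ∈ G, ∀ u v : X, R u v → R (g u) (g v) := by
    intro g hg u v huv c
    exact huv ⟨fun w => c (g w), fun {a b} hab => c.valid ((hAut g hg a b).mp hab)⟩
  -- Key: R x y.
  have hRxy : R x y := by
    intro c
    -- c is injective on C
    have hinj : Set.InjOn c (C : Set X) := by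
      intro a ha b hb hab
      by_contra hne
      exact c.valid (hC.1 ha hb hne) hab
    have hcard : (C.image c).card = r := by
      rw [Finset.card_image_of_injOn hinj, hC.2]
    have himg : C.image c = Finset.univ :=
      Finset.eq_univ_of_card _ (by simp [hcard])
    have : c y ∈ C.image c := himg ▸ Finset.mem_univ _
    obtain ⟨z0, hz0C, hz0⟩ := Finset.mem_image.mp this
    by_cases hz0x : z0 = x
    · rw [← hz0, hz0x]
    · -- z0 ∈ C, z0 ≠ x, so x ~ z0, so y ~ z0, so c y ≠ c z0: contradiction
      have hadj : Γ.Adj x z0 := hC.1 hxC hz0C (fun e => hz0x e.symm)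
      have : Γ.Adj y z0 := h z0 hz0C hadj
      exact absurd hz0 (c.valid this).symm
  rcases hPrim.2 R hEquiv hInv with htriv | huniv
  · exact hy1 (((htriv x y).mp hRxy).symm)
  · obtain ⟨a, b, hab⟩ := hEdge
    obtain ⟨c⟩ := hcol
    exact c.valid hab (huniv a b c)
end

section
/- Let Γ be a finite graph, neither complete nor null, k-regular, with chromatic number equal to clique number, and with automorphism group acting primitively on the vertices. Then for any two distinct vertices x, y, the neighbourhoods satisfy |N(x) ∩ N(y)| ≤ k − 2. -/
open Finset

namespace IsPrimitivePermGroup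

variable {X Y : Type*} {G : Subgroup (Equiv.Perm X)}

theorem injective_or_forall_eq (hG : IsPrimitivePermGroup G) (f : X → Y)
    (hf : ∀ g ∈ G, ∀ u v, f u = f v → f (g u) = f (g v)) :
    Function.Injective f ∨ ∀ u v, f u = f v :=
  (hG.2 (fun u v => f u = f v) ⟨fun _ => rfl, Eq.symm, Eq.trans⟩ hf).imp_left
    fun h _ _ huv => (h _ _).1 huv

end IsPrimitivePermGroup

namespace SimpleGraph

variable {X X' : Type*} {Γ : SimpleGraph X} {Γ' : SimpleGraph X'}

def cliqueSetThrough (Γ : SimpleGraph X) (n : ℕ) (v : X) : Set (Finset X) :=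
  {s ∈ Γ.cliqueSet n | v ∈ s}

def Iso.ofAdjIff (g : X ≃ X') (hg : ∀ x y, Γ.Adj x y ↔ Γ'.Adj (g x) (g y)) : Γ ≃g Γ' :=
  ⟨g, (hg _ _).symm⟩

theorem Iso.isNClique_map_iff (φ : Γ ≃g Γ') {n : ℕ} {s : Finset X} :
    Γ'.IsNClique n (s.map φ.toEquiv.toEmbedding) ↔ Γ.IsNClique n s := by
  simp [isNClique_iff, IsClique, Set.Pairwise, φ.map_adj_iff]

theorem Iso.cliqueSetThrough_apply (φ : Γ ≃g Γ') (n : ℕ) (v : X) :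
    Γ'.cliqueSetThrough n (φ v) =
      Finset.map φ.toEquiv.toEmbedding '' Γ.cliqueSetThrough n v := by
  ext K
  refine ⟨fun ⟨hK, hvK⟩ => ⟨K.map φ.symm.toEquiv.toEmbedding, ⟨?_, ?_⟩, ?_⟩, ?_⟩
  · exact φ.symm.isNClique_map_iff.2 hK
  · exact Finset.mem_map.2 ⟨φ v, hvK, φ.symm_apply_apply v⟩
  · simp [Finset.map_map]
  · rintro ⟨s, ⟨hs, hvs⟩, rfl⟩
    exact ⟨φ.isNClique_map_iff.2 hs, Finset.mem_map_of_mem _ hvs⟩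

theorem Coloring.apply_eq_of_isNClique {α : Type*} [Fintype α] (c : Γ.Coloring α)
    {K : Finset X} (hK : Γ.IsNClique (Fintype.card α) K) {x y : X} (hx : x ∈ K)
    (hy : ∀ z ∈ K, z ≠ x → Γ.Adj y z) : c y = c x := by
  obtain ⟨z, hz, hcz⟩ := c.surjOn_of_card_le_isClique hK.1 hK.2.ge (Set.mem_univ (c y))
  by_contra hne
  exact c.valid (hy z hz (by rintro rfl; exact hne hcz.symm)) hcz.symm

theorem exists_adj_forall_adj_of_degree_le [DecidableEq X] {x y : X}
    [Fintype (Γ.neighborSet x)] [Fintype (Γ.neighborSet y)] (hx : 0 < Γ.degree x)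
    (h : Γ.degree x ≤ #(Γ.neighborFinset x ∩ Γ.neighborFinset y) + 1) :
    ∃ a, Γ.Adj x a ∧ ∀ w, Γ.Adj x w → w ≠ a → Γ.Adj y w := by
  have hsdiff : #(Γ.neighborFinset x \ Γ.neighborFinset y) ≤ 1 := by
    rw [card_sdiff, inter_comm, card_neighborFinset_eq_degree]
    omega
  obtain ⟨a, hxa, hsub⟩ :
      ∃ a ∈ Γ.neighborFinset x, Γ.neighborFinset x \ Γ.neighborFinset y ⊆ {a} := by
    rcases (Γ.neighborFinset x \ Γ.neighborFinset y).eq_empty_or_nonempty with h | ⟨a, ha⟩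
    · obtain ⟨a, ha⟩ := card_pos.1 ((Γ.card_neighborFinset_eq_degree x).symm ▸ hx)
      exact ⟨a, ha, h ▸ empty_subset _⟩
    · exact ⟨a, (mem_sdiff.1 ha).1,
        fun b hb => mem_singleton.2 (card_le_one.1 hsdiff b hb a ha)⟩
  refine ⟨a, (mem_neighborFinset _ _ _).1 hxa, fun w hxw hwa => ?_⟩
  by_contra hyw
  exact hwa (mem_singleton.1 (hsub (by simp [hxw, hyw])))

variable {G : Subgroup (Equiv.Perm X)}

theorem eq_of_forall_coloring_apply_eq (hPrim : IsPrimitivePermGroup G)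
    (hAut : ∀ g ∈ G, ∀ x y, Γ.Adj x y ↔ Γ.Adj (g x) (g y)) {α : Type*}
    (hc : Nonempty (Γ.Coloring α)) (hEdge : ∃ x y, Γ.Adj x y) {u v : X}
    (h : ∀ c : Γ.Coloring α, c u = c v) : u = v := by
  have hequiv : ∀ g ∈ G, ∀ u v, (fun c : Γ.Coloring α => c u) = (fun c => c v) →
      (fun c : Γ.Coloring α => c (g u)) = (fun c => c (g v)) := fun g hg u v huv =>
    funext fun c => congrFun huv (c.comp (Iso.ofAdjIff g (hAut g hg)).toHom)
  rcases hPrim.injective_or_forall_eq _ hequiv with hinj | hconst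
  · exact hinj (funext h)
  · obtain ⟨p, q, hpq⟩ := hEdge
    obtain ⟨c⟩ := hc
    exact (c.valid hpq (congrFun (hconst p q) c)).elim

theorem cliqueSetThrough_eq_of_subset (hTrans : ∀ x y : X, ∃ g ∈ G, g x = y)
    (hAut : ∀ g ∈ G, ∀ x y, Γ.Adj x y ↔ Γ.Adj (g x) (g y)) [Finite X] {n : ℕ} {u v : X}
    (h : Γ.cliqueSetThrough n u ⊆ Γ.cliqueSetThrough n v) :
    Γ.cliqueSetThrough n u = Γ.cliqueSetThrough n v := by
  obtain ⟨g, hg, rfl⟩ := hTrans u v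
  let φ := Iso.ofAdjIff g (hAut g hg)
  refine Set.eq_of_subset_of_ncard_le h ?_ (Set.toFinite _)
  rw [show g u = φ u from rfl, φ.cliqueSetThrough_apply,
    Set.ncard_image_of_injective _ (Finset.map_injective _)]

theorem eq_of_cliqueSetThrough_cliqueNum_eq (hPrim : IsPrimitivePermGroup G)
    (hAut : ∀ g ∈ G, ∀ x y, Γ.Adj x y ↔ Γ.Adj (g x) (g y)) [Finite X]
    (hNonComplete : ∃ x y, x ≠ y ∧ ¬Γ.Adj x y) {u v : X}
    (h : Γ.cliqueSetThrough Γ.cliqueNum u = Γ.cliqueSetThrough Γ.cliqueNum v) : u = v := by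
  have hequiv : ∀ g ∈ G, ∀ u v, Γ.cliqueSetThrough Γ.cliqueNum u =
      Γ.cliqueSetThrough Γ.cliqueNum v → Γ.cliqueSetThrough Γ.cliqueNum (g u) =
      Γ.cliqueSetThrough Γ.cliqueNum (g v) := fun g hg u v huv => by
    let φ := Iso.ofAdjIff g (hAut g hg)
    rw [show g u = φ u from rfl, show g v = φ v from rfl, φ.cliqueSetThrough_apply,
      φ.cliqueSetThrough_apply, huv]
  rcases hPrim.injective_or_forall_eq _ hequiv with hinj | hconst
  · exact hinj h
  obtain ⟨p, q, hpq, hnadj⟩ := hNonComplete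
  obtain ⟨K, hK⟩ := Γ.exists_isNClique_cliqueNum
  have hpos : 1 ≤ Γ.cliqueNum := by
    simpa using IsClique.card_le_cliqueNum (t := {p}) (tc := by simp)
  obtain ⟨w, hw⟩ : K.Nonempty := card_pos.1 (hK.2 ▸ hpos)
  have hmem (z : X) : z ∈ K := by
    have hKw : K ∈ Γ.cliqueSetThrough Γ.cliqueNum w := ⟨hK, hw⟩
    rw [hconst w z] at hKw
    exact hKw.2
  exact (hnadj (hK.1 (hmem p) (hmem q) hpq)).elim

end SimpleGraph

theorem stmt4 {X : Type*} [Fintype X] [DecidableEq X] (Γ : SimpleGraph X)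
    [DecidableRel Γ.Adj] (k : ℕ)
    (G : Subgroup (Equiv.Perm X))
    (hAut : ∀ g ∈ G, ∀ x y : X, Γ.Adj x y ↔ Γ.Adj (g x) (g y))
    (hPrim : IsPrimitivePermGroup G)
    (hreg : Γ.IsRegularOfDegree k)
    (hchrom : Γ.chromaticNumber = (Γ.cliqueNum : ℕ∞))
    (hEdge : ∃ x y : X, Γ.Adj x y)
    (hNonComplete : ∃ x y : X, x ≠ y ∧ ¬ Γ.Adj x y) :
    ∀ x y : X, x ≠ y →
      ((Γ.neighborFinset x ∩ Γ.neighborFinset y).card : ℤ) ≤ (k : ℤ) - 2 := by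
  intro x y hxy
  by_contra! hcommon
  have hdeg : 0 < Γ.degree x := by
    obtain ⟨p, q, hpq⟩ := hEdge
    rw [hreg x, ← hreg p]
    exact Γ.degree_pos_iff_exists_adj p |>.2 ⟨q, hpq⟩
  obtain ⟨a, hxa, hya⟩ :=
    Γ.exists_adj_forall_adj_of_degree_le (y := y) hdeg (by rw [hreg x]; omega)
  by_cases hK : ∃ K, Γ.IsNClique Γ.cliqueNum K ∧ x ∈ K ∧ a ∉ K
  · obtain ⟨K, hK, hxK, haK⟩ := hK
    have hcol : Γ.Colorable Γ.cliqueNum := by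
      rw [← SimpleGraph.chromaticNumber_le_iff_colorable, hchrom]
    refine hxy (SimpleGraph.eq_of_forall_coloring_apply_eq hPrim hAut hcol hEdge
      fun c => ?_).symm
    refine c.apply_eq_of_isNClique (by rwa [Fintype.card_fin]) hxK fun z hz hzx => ?_
    exact hya z (hK.1 hxK hz hzx.symm) (ne_of_mem_of_not_mem hz haK)
  · push Not at hK
    have hsub : Γ.cliqueSetThrough Γ.cliqueNum x ⊆ Γ.cliqueSetThrough Γ.cliqueNum a :=
      fun K hxK => ⟨hxK.1, hK K hxK.1 hxK.2⟩
    exact hxa.ne (SimpleGraph.eq_of_cliqueSetThrough_cliqueNum_eq hPrim hAut hNonComplete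
      (SimpleGraph.cliqueSetThrough_eq_of_subset hPrim.1 hAut hsub))
end

section
/- Let Γ be a finite non-null graph whose automorphism group contains a primitive group G, and suppose the clique number of Γ is r and the chromatic number of Γ is also r. Then Γ contains no subgraph isomorphic to the complete graph K_{r+1} with one edge removed. -/
theorem stmt5 {X : Type*} [Fintype X] (Γ : SimpleGraph X) (r : ℕ)
    (G : Subgroup (Equiv.Perm X))
    (hAut : ∀ g ∈ G, ∀ x y : X, Γ.Adj x y ↔ Γ.Adj (g x) (g y))
    (hPrim : IsPrimitivePermGroup G)
    (hEdge : ∃ x y : X, Γ.Adj x y)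
    (hcl : Γ.cliqueNum = r)
    (hchrom : Γ.chromaticNumber = (r : ℕ∞)) :
    ¬ ∃ (s : Finset X) (a b : X), s.card = r + 1 ∧ a ∈ s ∧ b ∈ s ∧ a ≠ b ∧
      ∀ c ∈ s, ∀ d ∈ s, c ≠ d → ¬(c = a ∧ d = b) → ¬(c = b ∧ d = a) → Γ.Adj c d := by
  classical
  rintro ⟨s, a, b, hcard, has, hbs, hab, hadj⟩
  obtain ⟨hTrans, hBlocks⟩ := hPrim
  have hr1 : 1 ≤ r := by
    have h2 : 1 < s.card := Finset.one_lt_card.mpr ⟨a, has, b, hbs, hab⟩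
    omega
  set K : Finset X := (s.erase a).erase b with hK
  have hKmem : ∀ x, x ∈ K → x ∈ s ∧ x ≠ a ∧ x ≠ b := by
    intro x hx
    simp only [hK, Finset.mem_erase] at hx
    tauto
  have haK : a ∉ K := fun h => (hKmem a h).2.1 rfl
  have hbK : b ∉ K := fun h => (hKmem b h).2.2 rfl
  have hKcard : K.card = r - 1 := by
    have hb' : b ∈ s.erase a := Finset.mem_erase.mpr ⟨hab.symm, hbs⟩
    rw [hK, Finset.card_erase_of_mem hb', Finset.card_erase_of_mem has, hcard]; omega
  -- adjacency from b to K
  have hbadj : ∀ x ∈ K, Γ.Adj b x := by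
    intro x hx
    obtain ⟨hxs, hxa, hxb⟩ := hKmem x hx
    exact hadj b hbs x hxs (Ne.symm hxb) (fun h => hab h.1.symm)
      (fun h => hxa h.2)
  -- t = K ∪ {a} is a clique of size r
  set t : Finset X := insert a K with ht
  have htcard : t.card = r := by
    rw [ht, Finset.card_insert_of_notMem haK, hKcard]; omega
  have htadj : ∀ x ∈ t, ∀ y ∈ t, x ≠ y → Γ.Adj x y := by
    intro x hx y hy hxy
    rw [ht, Finset.mem_insert] at hx hy
    rcases hx with rfl | hx
    · rcases hy with rfl | hy
      · exact absurd rfl hxy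
      · obtain ⟨hys, hya, hyb⟩ := hKmem y hy
        exact hadj x has y hys hxy (fun h => hyb h.2) (fun h => hab h.1)
    · rcases hy with rfl | hy
      · obtain ⟨hxs, hxa, hxb⟩ := hKmem x hx
        exact hadj x hxs y has hxy (fun h => hxa h.1) (fun h => hxb h.1)
      · obtain ⟨hxs, hxa, hxb⟩ := hKmem x hx
        obtain ⟨hys, hya, hyb⟩ := hKmem y hy
        exact hadj x hxs y hys hxy (fun h => hxa h.1) (fun h => hxb h.1)
  -- key: every r-coloring gives a and b the same color
  have hRab : ∀ C : Γ.Coloring (Fin r), C a = C b := by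
    intro C
    have hinj : Set.InjOn C t := by
      intro x hx y hy hCxy
      by_contra hne
      exact C.valid (htadj x hx y hy hne) hCxy
    have himg : t.image C = Finset.univ := by
      apply Finset.eq_univ_of_card
      rw [Finset.card_image_of_injOn hinj, htcard, Fintype.card_fin]
    have hCb : C b ∈ t.image C := by rw [himg]; exact Finset.mem_univ _
    obtain ⟨x, hxt, hxC⟩ := Finset.mem_image.mp hCb
    rw [ht, Finset.mem_insert] at hxt
    rcases hxt with rfl | hx
    · exact hxC
    · exact absurd hxC.symm (C.valid (hbadj x hx))
  -- the invariant equivalence relation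
  set R : X → X → Prop := fun x y => ∀ C : Γ.Coloring (Fin r), C x = C y with hR
  have requiv : Equivalence R :=
    ⟨fun x C => rfl, fun h C => (h C).symm, fun h1 h2 C => (h1 C).trans (h2 C)⟩
  have rinv : ∀ g ∈ G, ∀ x y : X, R x y → R (g x) (g y) := by
    intro g hg x y hxy C
    exact hxy (SimpleGraph.Coloring.mk (fun v => C (g v))
      (fun {u v} h => C.valid ((hAut g hg u v).mp h)))
  rcases hBlocks R requiv rinv with h | h
  · exact hab ((h a b).mp hRab)
  · obtain ⟨x, y, hxy⟩ := hEdge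
    have hcol : Γ.Colorable r := by
      rw [← SimpleGraph.chromaticNumber_le_iff_colorable, hchrom]
    obtain ⟨C⟩ := hcol
    exact C.valid hxy (h x y C)
end

section
/- Let Γ be a finite k-regular graph, neither complete nor null, with clique number equal to chromatic number and primitive automorphism group. Let A be a set of vertices of size at least 3 such that the union N_A of the neighbourhoods of the members of A has size at most k+2. Then for any two distinct x, y ∈ A: |N(x) ∩ N(y)| = k−2, N(x) ∪ N(y) = N_A, and every vertex w ∈ N_A is adjacent to at least |A|−1 elements of A. -/
/-!
Primitivity rules out distinct vertices `x, y` with `|N(x) \ N(y)| ≤ 1`. Being coloured alike by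
every `ω`-colouring is a `G`-invariant equivalence relation, not universal since `Γ` has an edge,
so some `ω`-colouring separates `x` from `y`. Every maximum clique through `x` then meets the
colour class of `y` in a vertex of `N(x) \ N(y)`; were that set a singleton `{w}`, the vertices
`x ≠ w` would lie on the same maximum cliques, another invariant relation, which cannot be
universal because `Γ` is not complete.

So `|N(x) ∩ N(y)| ≤ k - 2`, whence `|N(x) ∪ N(y)| ≥ k + 2 ≥ |N_A|` for distinct `x, y ∈ A`: equality
holds throughout and `N(x) ∪ N(y) = N_A`. A vertex of `N_A` non-adjacent to two members of `A`
would lie outside their union.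
-/

open Finset

theorem IsPrimitivePermGroup.injective_or_forall_eq_s6 {X β : Type*} {G : Subgroup (Equiv.Perm X)}
    (hG : IsPrimitivePermGroup G) (f : X → β)
    (hf : ∀ g ∈ G, ∀ x y, f x = f y → f (g x) = f (g y)) :
    f.Injective ∨ ∀ x y, f x = f y :=
  (hG.2 (fun x y => f x = f y) ⟨fun _ => rfl, Eq.symm, Eq.trans⟩ hf).imp
    (fun h _ _ hxy => (h _ _).1 hxy) id

namespace SimpleGraph

variable {X : Type*} {Γ : SimpleGraph X}

theorem Iso.isNClique_map_iff_s6 {Y : Type*} {Δ : SimpleGraph Y} (e : Γ ≃g Δ) {n : ℕ}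
    {s : Finset X} : Δ.IsNClique n (s.map e.toEquiv.toEmbedding) ↔ Γ.IsNClique n s := by
  simp only [isNClique_iff, isClique_iff, card_map, coe_map,
    Set.InjOn.pairwise_image e.toEquiv.toEmbedding.injective.injOn]
  exact and_congr_left fun _ => forall₂_congr fun _ _ => forall₂_congr fun _ _ =>
    imp_congr_right fun _ => e.map_adj_iff

theorem exists_coloring_ne {α : Type*} {G : Subgroup (Equiv.Perm X)}
    (hAut : ∀ g ∈ G, ∀ x y : X, Γ.Adj x y ↔ Γ.Adj (g x) (g y))
    (hPrim : IsPrimitivePermGroup G) (hcol : Nonempty (Γ.Coloring α))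
    (hEdge : ∃ x y : X, Γ.Adj x y) {x y : X} (hxy : x ≠ y) :
    ∃ c : Γ.Coloring α, c x ≠ c y := by
  by_contra! hsame
  rcases hPrim.injective_or_forall_eq_s6 (fun u (c : Γ.Coloring α) => c u)
      (fun g hg u v huv => funext fun c =>
        congrFun huv (c.comp (Iso.toHom ⟨g, (hAut g hg _ _).symm⟩))) with hinj | hconst
  · exact hxy (hinj (funext hsame))
  · obtain ⟨a, b, hab⟩ := hEdge
    obtain ⟨c⟩ := hcol
    exact c.valid hab (congrFun (hconst a b) c)

variable [Fintype X] [DecidableEq X] [DecidableRel Γ.Adj]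

theorem Coloring.exists_mem_sdiff_neighborFinset {α : Type*} [Fintype α] (c : Γ.Coloring α)
    {K : Finset X} (hK : Γ.IsClique (K : Set X)) (hcard : Fintype.card α ≤ #K) {x y : X}
    (hxK : x ∈ K) (hc : c x ≠ c y) : ∃ z ∈ K, z ∈ Γ.neighborFinset x \ Γ.neighborFinset y := by
  obtain ⟨z, hzK, hzy⟩ := c.surjOn_of_card_le_isClique hK hcard (Set.mem_univ (c y))
  have hzx : x ≠ z := by rintro rfl; exact hc hzy
  refine ⟨z, hzK, mem_sdiff.2 ⟨(mem_neighborFinset _ _ _).2 (hK hxK hzK hzx), fun hyz => ?_⟩⟩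
  exact c.valid ((mem_neighborFinset _ _ _).1 hyz) hzy.symm

variable (Γ) in
noncomputable def maximumCliquesThrough (u : X) : Finset (Finset X) :=
  {K ∈ Γ.cliqueFinset Γ.cliqueNum | u ∈ K}

theorem mem_maximumCliquesThrough {u : X} {K : Finset X} :
    K ∈ Γ.maximumCliquesThrough u ↔ Γ.IsNClique Γ.cliqueNum K ∧ u ∈ K := by
  simp [maximumCliquesThrough]

theorem maximumCliquesThrough_apply_eq_map {g : Equiv.Perm X}
    (hg : ∀ x y : X, Γ.Adj x y ↔ Γ.Adj (g x) (g y)) (u : X) :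
    Γ.maximumCliquesThrough (g u) = (Γ.maximumCliquesThrough u).map g.finsetCongr.toEmbedding := by
  let e : Γ ≃g Γ := ⟨g, (hg _ _).symm⟩
  ext K
  rw [mem_map_equiv, Equiv.finsetCongr_symm, Equiv.finsetCongr_apply, mem_maximumCliquesThrough,
    mem_maximumCliquesThrough, ← e.symm.isNClique_map_iff_s6, mem_map_equiv]
  rfl

section Transitive

variable {G : Subgroup (Equiv.Perm X)}
  (hAut : ∀ g ∈ G, ∀ x y : X, Γ.Adj x y ↔ Γ.Adj (g x) (g y))
  (hTrans : ∀ x y : X, ∃ g ∈ G, g x = y)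
include hAut hTrans

theorem card_maximumCliquesThrough_eq (u v : X) :
    #(Γ.maximumCliquesThrough u) = #(Γ.maximumCliquesThrough v) := by
  obtain ⟨g, hg, rfl⟩ := hTrans u v
  rw [maximumCliquesThrough_apply_eq_map (hAut g hg) u, card_map]

theorem maximumCliquesThrough_nonempty (u : X) : (Γ.maximumCliquesThrough u).Nonempty := by
  obtain ⟨K, hK⟩ := Γ.exists_isNClique_cliqueNum
  have hcliqueNum : 1 ≤ Γ.cliqueNum := by
    simpa using IsClique.card_le_cliqueNum (G := Γ) (t := {u}) (tc := by simp)
  obtain ⟨w, hw⟩ : K.Nonempty := card_pos.1 (hK.card_eq ▸ hcliqueNum)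
  rw [← card_pos, card_maximumCliquesThrough_eq hAut hTrans u w, card_pos]
  exact ⟨K, mem_maximumCliquesThrough.2 ⟨hK, hw⟩⟩

end Transitive

section Primitive

variable {G : Subgroup (Equiv.Perm X)}
  (hAut : ∀ g ∈ G, ∀ x y : X, Γ.Adj x y ↔ Γ.Adj (g x) (g y)) (hPrim : IsPrimitivePermGroup G)
include hAut hPrim

theorem two_le_card_sdiff_neighborFinset_of_coloring_ne
    (hNonComplete : ∃ x y : X, x ≠ y ∧ ¬ Γ.Adj x y) {α : Type*} [Fintype α]
    (c : Γ.Coloring α) (hα : Fintype.card α ≤ Γ.cliqueNum) {x y : X} (hc : c x ≠ c y) :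
    2 ≤ #(Γ.neighborFinset x \ Γ.neighborFinset y) := by
  set S := Γ.maximumCliquesThrough
  have hmeets : ∀ K ∈ S x, ∃ z ∈ K, z ∈ Γ.neighborFinset x \ Γ.neighborFinset y := by
    intro K hK
    obtain ⟨hKc, hxK⟩ := mem_maximumCliquesThrough.1 hK
    exact c.exists_mem_sdiff_neighborFinset hKc.isClique (hKc.card_eq ▸ hα) hxK hc
  by_contra! hlt
  obtain ⟨K₁, hK₁⟩ := maximumCliquesThrough_nonempty hAut hPrim.1 x
  obtain ⟨z, -, hz⟩ := hmeets K₁ hK₁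
  obtain ⟨w, hw⟩ : ∃ w, Γ.neighborFinset x \ Γ.neighborFinset y = {w} :=
    card_eq_one.1 (by have := card_pos.2 ⟨z, hz⟩; omega)
  have hSxw : S x = S w := by
    refine eq_of_subset_of_card_le (fun K hK => ?_)
      (card_maximumCliquesThrough_eq hAut hPrim.1 w x).le
    obtain ⟨z, hzK, hz⟩ := hmeets K hK
    rw [hw, mem_singleton] at hz
    exact mem_maximumCliquesThrough.2 ⟨(mem_maximumCliquesThrough.1 hK).1, hz ▸ hzK⟩
  rcases hPrim.injective_or_forall_eq_s6 S (fun g hg u v huv => by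
      simp only [S, maximumCliquesThrough_apply_eq_map (hAut g hg), huv]) with hinj | hconst
  · have hwx : w ∈ Γ.neighborFinset x \ Γ.neighborFinset y := hw ▸ mem_singleton_self w
    exact ((mem_neighborFinset _ _ _).1 (mem_sdiff.1 hwx).1).ne (hinj hSxw)
  · obtain ⟨a, b, hab, hnadj⟩ := hNonComplete
    obtain ⟨K, hK⟩ := maximumCliquesThrough_nonempty hAut hPrim.1 a
    have hKb : K ∈ S b := hconst a b ▸ hK
    obtain ⟨hKc, haK⟩ := mem_maximumCliquesThrough.1 hK
    have hbK : b ∈ K := (mem_maximumCliquesThrough.1 hKb).2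
    exact hnadj (hKc.isClique haK hbK hab)

theorem two_le_card_sdiff_neighborFinset
    (hchrom : Γ.chromaticNumber = (Γ.cliqueNum : ℕ∞)) (hEdge : ∃ x y : X, Γ.Adj x y)
    (hNonComplete : ∃ x y : X, x ≠ y ∧ ¬ Γ.Adj x y) {x y : X} (hxy : x ≠ y) :
    2 ≤ #(Γ.neighborFinset x \ Γ.neighborFinset y) := by
  obtain ⟨c, hc⟩ :=
    exists_coloring_ne hAut hPrim (chromaticNumber_le_iff_colorable.1 hchrom.le) hEdge hxy
  exact two_le_card_sdiff_neighborFinset_of_coloring_ne hAut hPrim hNonComplete c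
    (Fintype.card_fin _).le hc

theorem card_inter_neighborFinset_add_two_le {k : ℕ} (hreg : Γ.IsRegularOfDegree k)
    (hchrom : Γ.chromaticNumber = (Γ.cliqueNum : ℕ∞)) (hEdge : ∃ x y : X, Γ.Adj x y)
    (hNonComplete : ∃ x y : X, x ≠ y ∧ ¬ Γ.Adj x y) {x y : X} (hxy : x ≠ y) :
    #(Γ.neighborFinset x ∩ Γ.neighborFinset y) + 2 ≤ k := by
  have hsplit := card_sdiff_add_card_inter (Γ.neighborFinset x) (Γ.neighborFinset y)
  rw [card_neighborFinset_eq_degree, hreg x] at hsplit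
  have := two_le_card_sdiff_neighborFinset hAut hPrim hchrom hEdge hNonComplete hxy
  omega

end Primitive

section SmallNeighbourhood

variable {A : Finset X} {k : ℕ}

theorem card_inter_add_two_eq_and_union_eq_biUnion (hreg : Γ.IsRegularOfDegree k)
    (hNA : #(A.biUnion (Γ.neighborFinset ·)) ≤ k + 2) {x y : X} (hx : x ∈ A) (hy : y ∈ A)
    (hcommon : #(Γ.neighborFinset x ∩ Γ.neighborFinset y) + 2 ≤ k) :
    #(Γ.neighborFinset x ∩ Γ.neighborFinset y) + 2 = k ∧
      Γ.neighborFinset x ∪ Γ.neighborFinset y = A.biUnion (Γ.neighborFinset ·) := by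
  have hsub : Γ.neighborFinset x ∪ Γ.neighborFinset y ⊆ A.biUnion (Γ.neighborFinset ·) :=
    union_subset (subset_biUnion_of_mem (Γ.neighborFinset ·) hx)
      (subset_biUnion_of_mem (Γ.neighborFinset ·) hy)
  have hsum := card_union_add_card_inter (Γ.neighborFinset x) (Γ.neighborFinset y)
  rw [card_neighborFinset_eq_degree, card_neighborFinset_eq_degree, hreg x, hreg y] at hsum
  have := card_le_card hsub
  exact ⟨by omega, eq_of_subset_of_card_le hsub (by omega)⟩

theorem card_sub_one_le_card_neighborFinset_inter
    (hunion : ∀ x ∈ A, ∀ y ∈ A, x ≠ y →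
      Γ.neighborFinset x ∪ Γ.neighborFinset y = A.biUnion (Γ.neighborFinset ·))
    {w : X} (hw : w ∈ A.biUnion (Γ.neighborFinset ·)) :
    #A - 1 ≤ #(Γ.neighborFinset w ∩ A) := by
  have hnonadj : #(A \ Γ.neighborFinset w) ≤ 1 := by
    refine card_le_one.2 fun a ha b hb => by_contra fun hab => ?_
    rw [mem_sdiff, mem_neighborFinset] at ha hb
    rw [← hunion a ha.1 b hb.1 hab, mem_union, mem_neighborFinset, mem_neighborFinset] at hw
    exact hw.elim (fun h => ha.2 h.symm) (fun h => hb.2 h.symm)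
  have := card_inter_add_card_sdiff A (Γ.neighborFinset w)
  rw [inter_comm] at this
  omega

end SmallNeighbourhood

end SimpleGraph

open SimpleGraph in
theorem stmt6_general {X : Type*} [Fintype X] [DecidableEq X] (Γ : SimpleGraph X)
    [DecidableRel Γ.Adj] (k : ℕ)
    (G : Subgroup (Equiv.Perm X))
    (hAut : ∀ g ∈ G, ∀ x y : X, Γ.Adj x y ↔ Γ.Adj (g x) (g y))
    (hPrim : IsPrimitivePermGroup G)
    (hreg : Γ.IsRegularOfDegree k)
    (hchrom : Γ.chromaticNumber = (Γ.cliqueNum : ℕ∞))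
    (hEdge : ∃ x y : X, Γ.Adj x y)
    (hNonComplete : ∃ x y : X, x ≠ y ∧ ¬ Γ.Adj x y)
    (A : Finset X)
    (hNA : (A.biUnion fun a => Γ.neighborFinset a).card ≤ k + 2) :
    ∀ x ∈ A, ∀ y ∈ A, x ≠ y →
      (Γ.neighborFinset x ∩ Γ.neighborFinset y).card + 2 = k ∧
      Γ.neighborFinset x ∪ Γ.neighborFinset y = A.biUnion (fun a => Γ.neighborFinset a) ∧
      ∀ w ∈ A.biUnion (fun a => Γ.neighborFinset a),
        A.card - 1 ≤ (Γ.neighborFinset w ∩ A).card := by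
  have hpair : ∀ x ∈ A, ∀ y ∈ A, x ≠ y →
      #(Γ.neighborFinset x ∩ Γ.neighborFinset y) + 2 = k ∧
        Γ.neighborFinset x ∪ Γ.neighborFinset y = A.biUnion (Γ.neighborFinset ·) :=
    fun x hx y hy hxy => card_inter_add_two_eq_and_union_eq_biUnion hreg hNA hx hy
      (card_inter_neighborFinset_add_two_le hAut hPrim hreg hchrom hEdge hNonComplete hxy)
  intro x hx y hy hxy
  exact ⟨(hpair x hx y hy hxy).1, (hpair x hx y hy hxy).2,
    fun w hw => card_sub_one_le_card_neighborFinset_inter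
      (fun a ha b hb hab => (hpair a ha b hb hab).2) hw⟩

theorem stmt6 {X : Type*} [Fintype X] [DecidableEq X] (Γ : SimpleGraph X)
    [DecidableRel Γ.Adj] (k : ℕ)
    (G : Subgroup (Equiv.Perm X))
    (hAut : ∀ g ∈ G, ∀ x y : X, Γ.Adj x y ↔ Γ.Adj (g x) (g y))
    (hPrim : IsPrimitivePermGroup G)
    (hreg : Γ.IsRegularOfDegree k)
    (hchrom : Γ.chromaticNumber = (Γ.cliqueNum : ℕ∞))
    (hEdge : ∃ x y : X, Γ.Adj x y)
    (hNonComplete : ∃ x y : X, x ≠ y ∧ ¬ Γ.Adj x y)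
    (A : Finset X) (hA : 3 ≤ A.card)
    (hNA : (A.biUnion fun a => Γ.neighborFinset a).card ≤ k + 2) :
    ∀ x ∈ A, ∀ y ∈ A, x ≠ y →
      (Γ.neighborFinset x ∩ Γ.neighborFinset y).card + 2 = k ∧
      Γ.neighborFinset x ∪ Γ.neighborFinset y = A.biUnion (fun a => Γ.neighborFinset a) ∧
      ∀ w ∈ A.biUnion (fun a => Γ.neighborFinset a),
        A.card - 1 ≤ (Γ.neighborFinset w ∩ A).card :=
  stmt6_general Γ k G hAut hPrim hreg hchrom hEdge hNonComplete A hNA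
end

section
/- Let Γ be a finite k-regular graph, neither complete nor null, with clique number equal to chromatic number and primitive automorphism group. Suppose A₁ and A₂ are two vertex sets, each of size 3 and each satisfying |∪_{a∈Aᵢ} N(a)| ≤ k+2. If |A₁ ∩ A₂| ≥ 2, then A₁ = A₂. -/
open Finset SimpleGraph

section

variable {X : Type*} {Γ : SimpleGraph X} {G : Subgroup (Equiv.Perm X)} {r : ℕ}

lemma SimpleGraph.IsNClique.map_of_adj_iff {g : X ≃ X} (hg : ∀ x y, Γ.Adj x y ↔ Γ.Adj (g x) (g y))
    {K : Finset X} (hK : Γ.IsNClique r K) : Γ.IsNClique r (K.map g.toEmbedding) := by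
  refine ⟨?_, by rw [card_map, hK.card_eq]⟩
  rw [coe_map]
  rintro _ ⟨a, ha, rfl⟩ _ ⟨b, hb, rfl⟩ hne
  exact (hg a b).1 (hK.isClique ha hb (ne_of_apply_ne _ hne))

lemma exists_coloring_ne (hAut : ∀ g ∈ G, ∀ x y : X, Γ.Adj x y ↔ Γ.Adj (g x) (g y))
    (hPrim : IsPrimitivePermGroup G) (hEdge : ∃ x y : X, Γ.Adj x y) (hcol : Γ.Colorable r)
    {a b : X} (hab : a ≠ b) : ∃ C : Γ.Coloring (Fin r), C a ≠ C b := by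
  by_contra! hforced
  let R : X → X → Prop := fun u v => ∀ C : Γ.Coloring (Fin r), C u = C v
  have hR : Equivalence R :=
    ⟨fun _ _ => rfl, fun h C => (h C).symm, fun h₁ h₂ C => (h₁ C).trans (h₂ C)⟩
  have hRG : ∀ g ∈ G, ∀ x y, R x y → R (g x) (g y) := fun g hg x y hxy C =>
    hxy (Coloring.mk (C ∘ g) fun h => C.valid ((hAut g hg _ _).1 h))
  rcases hPrim.2 R hR hRG with htriv | huniv
  · exact hab ((htriv a b).1 hforced)
  · obtain ⟨x, y, hxy⟩ := hEdge
    obtain ⟨C⟩ := hcol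
    exact C.valid hxy (huniv x y C)

lemma SimpleGraph.IsNClique.exists_mem_sdiff_neighborFinset_color_eq [Fintype X] [DecidableEq X]
    [DecidableRel Γ.Adj] {K : Finset X} (hK : Γ.IsNClique r K) (C : Γ.Coloring (Fin r)) (b : X) :
    ∃ s ∈ K \ Γ.neighborFinset b, C s = C b := by
  obtain ⟨s, hs, hCs⟩ :=
    C.surjOn_of_card_le_isClique hK.isClique (by simp [hK.card_eq]) (Set.mem_univ (C b))
  exact ⟨s, mem_sdiff.2 ⟨hs, fun h => C.valid ((mem_neighborFinset _ _ _).1 h) hCs.symm⟩, hCs⟩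

lemma SimpleGraph.Coloring.eq_of_neighborFinset_subset_union [Fintype X] [DecidableEq X]
    [DecidableRel Γ.Adj] (C : Γ.Coloring (Fin r)) {K : Finset X} (hK : Γ.IsNClique r K)
    {a b e : X} (heK : e ∈ K) (hab : C a = C b)
    (he : Γ.neighborFinset e ⊆ Γ.neighborFinset a ∪ Γ.neighborFinset b) : C e = C a := by
  obtain ⟨s, hs, hCs⟩ := hK.exists_mem_sdiff_neighborFinset_color_eq C a
  rw [mem_sdiff] at hs
  obtain rfl | hse := eq_or_ne s e
  · exact hCs
  have hsN := he ((mem_neighborFinset _ _ _).2 (hK.isClique heK hs.1 hse.symm))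
  rcases mem_union.1 hsN with h | h
  · exact absurd h hs.2
  · exact absurd (hCs.trans hab).symm (C.valid ((mem_neighborFinset _ _ _).1 h))

lemma card_filter_isNClique_mem_eq [Fintype X] [DecidableEq X] [DecidableRel Γ.Adj]
    (hAut : ∀ g ∈ G, ∀ x y : X, Γ.Adj x y ↔ Γ.Adj (g x) (g y))
    (hTrans : ∀ x y : X, ∃ g ∈ G, g x = y) (u v : X) :
    #{K ∈ Γ.cliqueFinset r | u ∈ K} = #{K ∈ Γ.cliqueFinset r | v ∈ K} := by
  have key : ∀ u v : X, #{K ∈ Γ.cliqueFinset r | u ∈ K} ≤ #{K ∈ Γ.cliqueFinset r | v ∈ K} := by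
    intro u v
    obtain ⟨g, hg, rfl⟩ := hTrans u v
    refine card_le_card_of_injOn (·.map g.toEmbedding) (fun K hK => ?_)
      (Finset.map_injective _).injOn
    simp only [coe_filter, Set.mem_ofPred_eq, mem_cliqueFinset_iff] at hK ⊢
    exact ⟨hK.1.map_of_adj_iff (hAut g hg), mem_map_of_mem _ hK.2⟩
  exact (key u v).antisymm (key v u)

lemma exists_isNClique_cliqueNum_mem [Fintype X]
    (hAut : ∀ g ∈ G, ∀ x y : X, Γ.Adj x y ↔ Γ.Adj (g x) (g y))
    (hTrans : ∀ x y : X, ∃ g ∈ G, g x = y) (v : X) :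
    ∃ K, Γ.IsNClique Γ.cliqueNum K ∧ v ∈ K := by
  obtain ⟨K₀, hK₀⟩ := Γ.exists_isNClique_cliqueNum
  have hpos : 0 < #K₀ := by
    rw [hK₀.card_eq]
    have := IsClique.card_le_cliqueNum (G := Γ) (t := {v}) (tc := by simp)
    rwa [card_singleton] at this
  obtain ⟨a, ha⟩ := card_pos.1 hpos
  obtain ⟨g, hg, rfl⟩ := hTrans a v
  exact ⟨K₀.map g.toEmbedding, hK₀.map_of_adj_iff (hAut g hg), mem_map_of_mem _ ha⟩

end

section

variable {X : Type*} [Fintype X] [DecidableEq X] {Γ : SimpleGraph X} [DecidableRel Γ.Adj]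
  {G : Subgroup (Equiv.Perm X)} {r k : ℕ}

lemma exists_isNClique_mem_notMem (hAut : ∀ g ∈ G, ∀ x y : X, Γ.Adj x y ↔ Γ.Adj (g x) (g y))
    (hPrim : IsPrimitivePermGroup G) (hNonComplete : ∃ x y : X, x ≠ y ∧ ¬ Γ.Adj x y)
    (hcover : ∀ v, ∃ K, Γ.IsNClique r K ∧ v ∈ K) {a d : X} (had : a ≠ d) :
    ∃ K, Γ.IsNClique r K ∧ a ∈ K ∧ d ∉ K := by
  by_contra! hcon
  let R : X → X → Prop := fun u v => ∀ K, Γ.IsNClique r K → (u ∈ K ↔ v ∈ K)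
  have hR : Equivalence R :=
    ⟨fun _ _ _ => Iff.rfl, fun h K hK => (h K hK).symm, fun h₁ h₂ K hK => (h₁ K hK).trans (h₂ K hK)⟩
  have hRG : ∀ g ∈ G, ∀ x y, R x y → R (g x) (g y) := by
    intro g hg x y hxy K hK
    simpa [mem_map_equiv, Equiv.Perm.inv_def] using hxy _ (hK.map_of_adj_iff (hAut _ (inv_mem hg)))
  rcases hPrim.2 R hR hRG with htriv | huniv
  · refine had ((htriv a d).1 fun K hK => ?_)
    have hsub : {K ∈ Γ.cliqueFinset r | a ∈ K} ⊆ {K ∈ Γ.cliqueFinset r | d ∈ K} := by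
      intro K hK
      simp only [mem_filter, mem_cliqueFinset_iff] at hK ⊢
      exact ⟨hK.1, hcon K hK.1 hK.2⟩
    have heq := eq_of_subset_of_card_le hsub (card_filter_isNClique_mem_eq hAut hPrim.1 d a).le
    simpa [hK] using congrArg (K ∈ ·) heq
  · obtain ⟨x, y, hxy, hnadj⟩ := hNonComplete
    obtain ⟨K, hK, hxK⟩ := hcover x
    exact hnadj (hK.isClique hxK ((huniv x y K hK).1 hxK) hxy)

lemma SimpleGraph.IsRegularOfDegree.card_neighborFinset_sdiff_add (hreg : Γ.IsRegularOfDegree k)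
    (a b : X) : #(Γ.neighborFinset a \ Γ.neighborFinset b) + k
      = #(Γ.neighborFinset a ∪ Γ.neighborFinset b) := by
  rw [← hreg b, ← card_neighborFinset_eq_degree]
  exact card_sdiff_add_card _ _

lemma one_lt_card_sdiff_neighborFinset (hAut : ∀ g ∈ G, ∀ x y : X, Γ.Adj x y ↔ Γ.Adj (g x) (g y))
    (hPrim : IsPrimitivePermGroup G) (hEdge : ∃ x y : X, Γ.Adj x y) (hcol : Γ.Colorable r)
    {K : Finset X} (hK : Γ.IsNClique r K) {b : X} (hb : b ∉ K) :
    1 < #(K \ Γ.neighborFinset b) := by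
  by_contra! h
  obtain ⟨C₀⟩ := hcol
  obtain ⟨c, hc, -⟩ := hK.exists_mem_sdiff_neighborFinset_color_eq C₀ b
  have hcb : c ≠ b := ne_of_mem_of_not_mem (mem_sdiff.1 hc).1 hb
  obtain ⟨C, hC⟩ := exists_coloring_ne hAut hPrim hEdge ⟨C₀⟩ hcb
  obtain ⟨s, hs, hCs⟩ := hK.exists_mem_sdiff_neighborFinset_color_eq C b
  exact hC (card_le_one.1 h s hs c hc ▸ hCs)

lemma add_two_le_card_neighborFinset_union
    (hAut : ∀ g ∈ G, ∀ x y : X, Γ.Adj x y ↔ Γ.Adj (g x) (g y))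
    (hPrim : IsPrimitivePermGroup G) (hEdge : ∃ x y : X, Γ.Adj x y)
    (hNonComplete : ∃ x y : X, x ≠ y ∧ ¬ Γ.Adj x y) (hcol : Γ.Colorable r)
    (hcover : ∀ v, ∃ K, Γ.IsNClique r K ∧ v ∈ K) (hreg : Γ.IsRegularOfDegree k)
    {a b : X} (hab : a ≠ b) : k + 2 ≤ #(Γ.neighborFinset a ∪ Γ.neighborFinset b) := by
  by_contra! h
  have hD : #(Γ.neighborFinset a \ Γ.neighborFinset b) ≤ 1 := by
    have := hreg.card_neighborFinset_sdiff_add a b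
    omega
  obtain ⟨K, hK, haK, hKD⟩ : ∃ K, Γ.IsNClique r K ∧ a ∈ K ∧
      Disjoint K (Γ.neighborFinset a \ Γ.neighborFinset b) := by
    rcases (Γ.neighborFinset a \ Γ.neighborFinset b).eq_empty_or_nonempty with hempty | ⟨d, hd⟩
    · obtain ⟨K, hK, haK⟩ := hcover a
      exact ⟨K, hK, haK, hempty ▸ disjoint_empty_right K⟩
    · have had : a ≠ d := fun h => Γ.notMem_neighborFinset_self a (h ▸ (mem_sdiff.1 hd).1)
      obtain ⟨K, hK, haK, hdK⟩ := exists_isNClique_mem_notMem hAut hPrim hNonComplete hcover had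
      refine ⟨K, hK, haK, disjoint_right.2 fun s hs hsK => hdK ?_⟩
      exact card_le_one.1 hD s hs d hd ▸ hsK
  have hNa : ∀ s ∈ K, s ≠ a → s ∈ Γ.neighborFinset a := fun s hs hsa =>
    (mem_neighborFinset _ _ _).2 (hK.isClique haK hs hsa.symm)
  have hbK : b ∉ K := fun hbK =>
    disjoint_left.1 hKD hbK (mem_sdiff.2 ⟨hNa b hbK hab.symm, Γ.notMem_neighborFinset_self b⟩)
  have hsub : K \ Γ.neighborFinset b ⊆ {a} := by
    intro s hs
    rw [mem_sdiff] at hs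
    by_contra hsa
    exact disjoint_left.1 hKD hs.1 (mem_sdiff.2 ⟨hNa s hs.1 (notMem_singleton.1 hsa), hs.2⟩)
  have := one_lt_card_sdiff_neighborFinset hAut hPrim hEdge hcol hK hbK
  have := card_le_card hsub
  rw [card_singleton] at this
  omega

lemma not_adj_of_card_neighborFinset_union_le
    (hAut : ∀ g ∈ G, ∀ x y : X, Γ.Adj x y ↔ Γ.Adj (g x) (g y))
    (hPrim : IsPrimitivePermGroup G) (hEdge : ∃ x y : X, Γ.Adj x y)
    (hNonComplete : ∃ x y : X, x ≠ y ∧ ¬ Γ.Adj x y) (hcol : Γ.Colorable r)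
    (hcover : ∀ v, ∃ K, Γ.IsNClique r K ∧ v ∈ K) (hreg : Γ.IsRegularOfDegree k)
    {a b : X} (h : #(Γ.neighborFinset a ∪ Γ.neighborFinset b) ≤ k + 2) : ¬ Γ.Adj a b := by
  intro hab
  have hD : #(Γ.neighborFinset a \ Γ.neighborFinset b) ≤ 2 := by
    have := hreg.card_neighborFinset_sdiff_add a b
    omega
  have hbD : b ∈ Γ.neighborFinset a \ Γ.neighborFinset b :=
    mem_sdiff.2 ⟨(mem_neighborFinset _ _ _).2 hab, Γ.notMem_neighborFinset_self b⟩
  obtain ⟨K, hK, haK, hbK⟩ := exists_isNClique_mem_notMem hAut hPrim hNonComplete hcover hab.ne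
  have hsub : K \ Γ.neighborFinset b ⊆ (Γ.neighborFinset a \ Γ.neighborFinset b).erase b := by
    intro s hs
    rw [mem_sdiff] at hs
    have hsa : s ≠ a := by
      rintro rfl
      exact hs.2 ((mem_neighborFinset _ _ _).2 hab.symm)
    refine mem_erase.2 ⟨fun hsb => hbK (hsb ▸ hs.1), mem_sdiff.2 ⟨?_, hs.2⟩⟩
    exact (mem_neighborFinset _ _ _).2 (hK.isClique haK hs.1 hsa.symm)
  have := one_lt_card_sdiff_neighborFinset hAut hPrim hEdge hcol hK hbK
  have := card_le_card hsub
  rw [card_erase_of_mem hbD] at this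
  omega

lemma SimpleGraph.IsIndepSet.card_le_card_of_forall_isNClique_mem
    (hAut : ∀ g ∈ G, ∀ x y : X, Γ.Adj x y ↔ Γ.Adj (g x) (g y))
    (hTrans : ∀ x y : X, ∃ g ∈ G, g x = y) (hcover : ∀ v, ∃ K, Γ.IsNClique r K ∧ v ∈ K)
    {B P : Finset X} (hB : Γ.IsIndepSet B)
    (hmeet : ∀ K, Γ.IsNClique r K → ∀ b ∈ B, b ∈ K → ∃ p ∈ P, p ∈ K) : #B ≤ #P := by
  rcases B.eq_empty_or_nonempty with rfl | ⟨b₀, hb₀⟩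
  · simp
  set m := #{K ∈ Γ.cliqueFinset r | b₀ ∈ K}
  have hm : ∀ v, #{K ∈ Γ.cliqueFinset r | v ∈ K} = m :=
    fun v => card_filter_isNClique_mem_eq hAut hTrans v b₀
  have hpos : 0 < m := by
    obtain ⟨K, hK, hb₀K⟩ := hcover b₀
    exact card_pos.2 ⟨K, mem_filter.2 ⟨mem_cliqueFinset_iff.2 hK, hb₀K⟩⟩
  have hclique : ∀ K ∈ Γ.cliqueFinset r, #{b ∈ B | b ∈ K} ≤ #{p ∈ P | p ∈ K} := by
    intro K hK
    rw [mem_cliqueFinset_iff] at hK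
    rcases (B.filter (· ∈ K)).eq_empty_or_nonempty with hempty | ⟨b, hb⟩
    · simp only [hempty, card_empty, zero_le]
    rw [mem_filter] at hb
    obtain ⟨p, hp, hpK⟩ := hmeet K hK b hb.1 hb.2
    have hle : #{b ∈ B | b ∈ K} ≤ 1 := card_le_one.2 fun x hx y hy => by
      rw [mem_filter] at hx hy
      by_contra hxy
      exact hB hx.1 hy.1 hxy (hK.isClique hx.2 hy.2 hxy)
    exact hle.trans (card_pos.2 ⟨p, mem_filter.2 ⟨hp, hpK⟩⟩)
  have hcount : #B * m ≤ #P * m := calc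
    #B * m = ∑ b ∈ B, #{K ∈ Γ.cliqueFinset r | b ∈ K} := by simp only [hm, sum_const, smul_eq_mul]
    _ = ∑ K ∈ Γ.cliqueFinset r, #{b ∈ B | b ∈ K} :=
      sum_card_bipartiteAbove_eq_sum_card_bipartiteBelow (r := fun b K => b ∈ K)
    _ ≤ ∑ K ∈ Γ.cliqueFinset r, #{p ∈ P | p ∈ K} := sum_le_sum hclique
    _ = ∑ p ∈ P, #{K ∈ Γ.cliqueFinset r | p ∈ K} :=
      (sum_card_bipartiteAbove_eq_sum_card_bipartiteBelow (r := fun p K => p ∈ K)).symm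
    _ = #P * m := by simp only [hm, sum_const, smul_eq_mul]
  exact Nat.le_of_mul_le_mul_right hcount hpos

lemma biUnion_neighborFinset_eq_union
    (hAut : ∀ g ∈ G, ∀ x y : X, Γ.Adj x y ↔ Γ.Adj (g x) (g y))
    (hPrim : IsPrimitivePermGroup G) (hEdge : ∃ x y : X, Γ.Adj x y)
    (hNonComplete : ∃ x y : X, x ≠ y ∧ ¬ Γ.Adj x y) (hcol : Γ.Colorable r)
    (hcover : ∀ v, ∃ K, Γ.IsNClique r K ∧ v ∈ K) (hreg : Γ.IsRegularOfDegree k)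
    {A : Finset X} (hA : #(A.biUnion fun a => Γ.neighborFinset a) ≤ k + 2)
    {a b : X} (ha : a ∈ A) (hb : b ∈ A) (hab : a ≠ b) :
    (A.biUnion fun a => Γ.neighborFinset a) = Γ.neighborFinset a ∪ Γ.neighborFinset b :=
  (eq_of_subset_of_card_le
    (union_subset (subset_biUnion_of_mem (fun a => Γ.neighborFinset a) ha)
      (subset_biUnion_of_mem (fun a => Γ.neighborFinset a) hb))
    (hA.trans (add_two_le_card_neighborFinset_union hAut hPrim hEdge hNonComplete hcol hcover
      hreg hab))).symm

lemma add_two_lt_card_biUnion_neighborFinset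
    (hAut : ∀ g ∈ G, ∀ x y : X, Γ.Adj x y ↔ Γ.Adj (g x) (g y))
    (hPrim : IsPrimitivePermGroup G) (hEdge : ∃ x y : X, Γ.Adj x y)
    (hNonComplete : ∃ x y : X, x ≠ y ∧ ¬ Γ.Adj x y) (hcol : Γ.Colorable r)
    (hcover : ∀ v, ∃ K, Γ.IsNClique r K ∧ v ∈ K) (hreg : Γ.IsRegularOfDegree k)
    {A : Finset X} (hA : 4 ≤ #A) : k + 2 < #(A.biUnion fun a => Γ.neighborFinset a) := by
  by_contra! hU
  set U := A.biUnion fun a => Γ.neighborFinset a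
  have hN : ∀ a ∈ A, Γ.neighborFinset a ⊆ U := fun a ha =>
    subset_biUnion_of_mem (fun a => Γ.neighborFinset a) ha
  have hpair : ∀ a ∈ A, ∀ b ∈ A, a ≠ b → Γ.neighborFinset a ∪ Γ.neighborFinset b = U :=
    fun a ha b hb hab =>
      (biUnion_neighborFinset_eq_union hAut hPrim hEdge hNonComplete hcol hcover hreg hU ha hb
        hab).symm
  obtain ⟨y, hy⟩ : A.Nonempty := card_pos.1 (by omega)
  set B := A.erase y
  have hB : 3 ≤ #B := by rw [card_erase_of_mem hy]; omega
  obtain ⟨x, hx⟩ : B.Nonempty := card_pos.1 (by omega)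
  obtain ⟨hxy, hxA⟩ := mem_erase.1 hx
  obtain ⟨C, hC⟩ := exists_coloring_ne hAut hPrim hEdge hcol hxy
  have hBindep : Γ.IsIndepSet B := fun a ha b hb hab =>
    not_adj_of_card_neighborFinset_union_le hAut hPrim hEdge hNonComplete hcol hcover hreg
      ((hpair a (mem_of_mem_erase ha) b (mem_of_mem_erase hb) hab).symm ▸ hU)
  have hBcolor : ∀ b ∈ B, C b ≠ C y := by
    intro b hb hby
    obtain ⟨hb, hbA⟩ := mem_erase.1 hb
    obtain rfl | hbx := eq_or_ne b x
    · exact hC hby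
    obtain ⟨K, hK, hxK⟩ := hcover x
    refine hC ((C.eq_of_neighborFinset_subset_union hK hxK hby ?_).trans hby)
    rw [hpair b hbA y hy hb]
    exact hN x hxA
  have hmeet : ∀ K, Γ.IsNClique r K → ∀ b ∈ B, b ∈ K → ∃ p ∈ U \ Γ.neighborFinset y, p ∈ K := by
    intro K hK b hb hbK
    obtain ⟨s, hs, hCs⟩ := hK.exists_mem_sdiff_neighborFinset_color_eq C y
    rw [mem_sdiff] at hs
    have hsb : s ≠ b := by
      rintro rfl
      exact hBcolor s hb hCs
    have hsU : s ∈ U := hN b (mem_of_mem_erase hb)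
      ((mem_neighborFinset _ _ _).2 (hK.isClique hbK hs.1 hsb.symm))
    exact ⟨s, mem_sdiff.2 ⟨hsU, hs.2⟩, hs.1⟩
  have hP : #(U \ Γ.neighborFinset y) ≤ 2 := by
    rw [card_sdiff_of_subset (hN y hy), card_neighborFinset_eq_degree, hreg y]
    omega
  have := hBindep.card_le_card_of_forall_isNClique_mem hAut hPrim.1 hcover hmeet
  omega

end

theorem stmt9 {X : Type*} [Fintype X] [DecidableEq X] (Γ : SimpleGraph X)
    [DecidableRel Γ.Adj] (k : ℕ)
    (G : Subgroup (Equiv.Perm X))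
    (hAut : ∀ g ∈ G, ∀ x y : X, Γ.Adj x y ↔ Γ.Adj (g x) (g y))
    (hPrim : IsPrimitivePermGroup G)
    (hreg : Γ.IsRegularOfDegree k)
    (hchrom : Γ.chromaticNumber = (Γ.cliqueNum : ℕ∞))
    (hEdge : ∃ x y : X, Γ.Adj x y)
    (hNonComplete : ∃ x y : X, x ≠ y ∧ ¬ Γ.Adj x y)
    (A₁ A₂ : Finset X) (h₁card : A₁.card = 3) (h₂card : A₂.card = 3)
    (h₁ : (A₁.biUnion fun a => Γ.neighborFinset a).card ≤ k + 2)
    (h₂ : (A₂.biUnion fun a => Γ.neighborFinset a).card ≤ k + 2)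
    (hint : 2 ≤ (A₁ ∩ A₂).card) :
    A₁ = A₂ := by
  have hcol : Γ.Colorable Γ.cliqueNum := chromaticNumber_le_iff_colorable.1 hchrom.le
  have hcover := exists_isNClique_cliqueNum_mem hAut hPrim.1
  by_contra hne
  have hI : #(A₁ ∩ A₂) = 2 := by
    refine le_antisymm (not_lt.1 fun h => hne ?_) hint
    exact (eq_of_subset_of_card_le inter_subset_left (by omega)).symm.trans
      (eq_of_subset_of_card_le inter_subset_right (by omega))
  obtain ⟨x, y, hxy, hxyI⟩ := card_eq_two.1 hI
  have hx : x ∈ A₁ ∩ A₂ := hxyI ▸ mem_insert_self x {y}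
  have hy : y ∈ A₁ ∩ A₂ := hxyI ▸ mem_insert_of_mem (mem_singleton_self y)
  have hU₁ := biUnion_neighborFinset_eq_union hAut hPrim hEdge hNonComplete hcol hcover hreg h₁
    (mem_inter.1 hx).1 (mem_inter.1 hy).1 hxy
  have hU₂ := biUnion_neighborFinset_eq_union hAut hPrim hEdge hNonComplete hcol hcover hreg h₂
    (mem_inter.1 hx).2 (mem_inter.1 hy).2 hxy
  have h4 := add_two_lt_card_biUnion_neighborFinset hAut hPrim hEdge hNonComplete hcol hcover hreg
    (A := A₁ ∪ A₂) (by have := card_union_add_card_inter A₁ A₂; omega)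
  rw [union_biUnion, hU₁, hU₂, union_self, ← hU₁] at h4
  omega
end

section
/- Let Γ be a strongly regular graph with parameters (n, k, λ, μ) satisfying μ > 0 and k > μ, and let f be a proper endomorphism of Γ (a graph endomorphism that is not an automorphism) of rank r. Then n − r ≥ (k − μ + 4)/4. -/
/-!
If `f u = f v` with `u ≠ v`, then `u, v` are non-adjacent and `f` maps the `2k - μ + 2`
vertices of `{u, v} ∪ N(u) ∪ N(v)` into the closed neighbourhood of `f u`, which has only
`k + 1` vertices. So `f` loses at least `k - μ + 1` vertices there, whence
`n - r ≥ k - μ + 1 ≥ (k - μ + 4) / 4`.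
-/

open Finset

theorem Finset.card_add_card_image_univ_le {α β : Type*} [Fintype α] [DecidableEq β]
    (f : α → β) (s : Finset α) :
    #s + #(univ.image f) ≤ #(s.image f) + Fintype.card α := by
  classical
  have hsplit : univ.image f ⊆ s.image f ∪ sᶜ.image f := by
    rw [← image_union, union_compl]
  have hcompl : #sᶜ + #s = Fintype.card α := by
    rw [card_compl, Nat.sub_add_cancel (card_le_univ s)]
  calc #s + #(univ.image f) ≤ #s + (#(s.image f) + #sᶜ) := by
        gcongr
        exact (card_le_card hsplit).trans ((card_union_le _ _).trans
          (Nat.add_le_add_left card_image_le _))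
    _ = #(s.image f) + Fintype.card α := by omega

namespace SimpleGraph

variable {V W : Type*} {G : SimpleGraph V} {G' : SimpleGraph W}

theorem Hom.not_adj_of_apply_eq (f : G →g G') {u v : V} (huv : f u = f v) : ¬ G.Adj u v :=
  fun ha => (f.map_adj ha).ne huv

theorem Hom.image_insert_neighborFinset_subset [Fintype V] [DecidableEq V] [DecidableRel G.Adj]
    [Fintype W] [DecidableEq W] [DecidableRel G'.Adj] (f : G →g G') (v : V) :
    (insert v (G.neighborFinset v)).image f ⊆ insert (f v) (G'.neighborFinset (f v)) := by
  intro y hy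
  obtain ⟨x, hx, rfl⟩ := mem_image.mp hy
  rcases mem_insert.mp hx with rfl | hx
  · exact mem_insert_self _ _
  · rw [mem_neighborFinset] at hx
    exact mem_insert_of_mem ((mem_neighborFinset _ _ _).mpr (f.map_adj hx))

variable [Fintype V] [DecidableRel G.Adj] {n k ℓ μ : ℕ}

theorem IsSRGWith.le_of_not_adj (h : G.IsSRGWith n k ℓ μ) {u v : V} (hne : u ≠ v)
    (ha : ¬ G.Adj u v) : μ ≤ k := by
  rw [← h.of_not_adj hne ha, ← h.regular.degree_eq u]
  exact G.card_commonNeighbors_le_degree_left u v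

theorem IsSRGWith.card_insert_neighborFinset_union_of_not_adj [DecidableEq V]
    (h : G.IsSRGWith n k ℓ μ) {u v : V} (hne : u ≠ v) (ha : ¬ G.Adj u v) :
    #(insert u (G.neighborFinset u) ∪ insert v (G.neighborFinset v)) = 2 * k - μ + 2 := by
  have hu : u ∉ G.neighborFinset u ∪ G.neighborFinset v := by
    simpa [mem_neighborFinset, adj_comm] using ha
  have hv : v ∉ G.neighborFinset u ∪ G.neighborFinset v := by
    simpa [mem_neighborFinset] using ha
  rw [insert_union, union_insert, card_insert_of_notMem (by simpa [hne] using hu),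
    card_insert_of_notMem hv, h.card_neighborFinset_union_of_not_adj hne ha]

theorem IsSRGWith.card_image_add_le_of_apply_eq [DecidableEq V] (h : G.IsSRGWith n k ℓ μ)
    (f : G →g G) {u v : V} (hne : u ≠ v) (huv : f u = f v) :
    #(univ.image f) + k + 1 ≤ n + μ := by
  have ha := f.not_adj_of_apply_eq huv
  set T := insert u (G.neighborFinset u) ∪ insert v (G.neighborFinset v)
  have himage : #(T.image f) ≤ k + 1 := by
    have hsub : T.image f ⊆ insert (f u) (G.neighborFinset (f u)) := by
      rw [image_union, union_subset_iff]
      exact ⟨f.image_insert_neighborFinset_subset u,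
        huv ▸ f.image_insert_neighborFinset_subset v⟩
    calc #(T.image f) ≤ #(insert (f u) (G.neighborFinset (f u))) := card_le_card hsub
      _ ≤ #(G.neighborFinset (f u)) + 1 := card_insert_le _ _
      _ = k + 1 := by rw [card_neighborFinset_eq_degree, h.regular.degree_eq]
  have hcount := card_add_card_image_univ_le f T
  rw [h.card_insert_neighborFinset_union_of_not_adj hne ha, h.card] at hcount
  have := h.le_of_not_adj hne ha
  omega

end SimpleGraph

theorem stmt14_general {V : Type*} [Fintype V] [DecidableEq V] (Γ : SimpleGraph V)
    [DecidableRel Γ.Adj] (n k ℓ μ : ℕ)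
    (h : Γ.IsSRGWith n k ℓ μ)
    (f : Γ →g Γ) (hf : ¬ Function.Bijective f) (r : ℕ)
    (hr : (Finset.univ.image (f : V → V)).card = r) :
    ((k : ℝ) - μ + 4) / 4 ≤ (n : ℝ) - r := by
  obtain ⟨u, v, huv, hne⟩ := Function.not_injective_iff.mp fun hi =>
    hf (Finite.injective_iff_bijective.mp hi)
  have hcount := h.card_image_add_le_of_apply_eq f hne huv
  have hμk := h.le_of_not_adj hne (f.not_adj_of_apply_eq huv)
  rw [hr] at hcount
  have hcount' : (r : ℝ) + k + 1 ≤ n + μ := by exact_mod_cast hcount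
  have hμk' : (μ : ℝ) ≤ k := by exact_mod_cast hμk
  linarith

theorem stmt14 {V : Type*} [Fintype V] [DecidableEq V] (Γ : SimpleGraph V)
    [DecidableRel Γ.Adj] (n k ℓ μ : ℕ)
    (h : Γ.IsSRGWith n k ℓ μ) (hμ : 0 < μ) (hk : μ < k)
    (f : Γ →g Γ) (hf : ¬ Function.Bijective f) (r : ℕ)
    (hr : (Finset.univ.image (f : V → V)).card = r) :
    ((k : ℝ) - μ + 4) / 4 ≤ (n : ℝ) - r :=
  stmt14_general Γ n k ℓ μ h f hf r hr
end

section
/- Let Γ be a strongly regular graph with parameters (n, k, λ, μ), with μ > 0 and k > μ, and let k′ = n − k − 1 be the valency of the complement. Then k − μ ≥ (1/3)·min(k, k′). -/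
open Finset Matrix SimpleGraph

private lemma conj_trace_aux {V : Type*} [Fintype V] [DecidableEq V]
    (A U D : Matrix V V ℝ) (h1 : star U * U = 1)
    (hspec : A = U * D * star U) :
    A.trace = D.trace ∧ (A * A).trace = (D * D).trace := by
  subst hspec
  constructor
  · rw [Matrix.trace_mul_cycle, h1, Matrix.one_mul]
  · rw [show (U * D * star U) * (U * D * star U) = U * (D * (star U * U) * D) * star U from by
      noncomm_ring, h1, Matrix.mul_one, Matrix.trace_mul_cycle, h1, Matrix.one_mul]

private lemma trace_eq_sum_eigs {V : Type*} [Fintype V] [DecidableEq V]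
    (A : Matrix V V ℝ) (hA : A.IsHermitian) :
    A.trace = ∑ i, hA.eigenvalues i := by
  rw [(conj_trace_aux A _ _ ((Matrix.mem_unitaryGroup_iff').mp hA.eigenvectorUnitary.2)
    hA.spectral_theorem).1, Matrix.trace_diagonal]
  simp

private lemma trace_sq_eq_sum_eigs {V : Type*} [Fintype V] [DecidableEq V]
    (A : Matrix V V ℝ) (hA : A.IsHermitian) :
    (A * A).trace = ∑ i, hA.eigenvalues i ^ 2 := by
  rw [(conj_trace_aux A _ _ ((Matrix.mem_unitaryGroup_iff').mp hA.eigenvectorUnitary.2)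
    hA.spectral_theorem).2, Matrix.diagonal_mul_diagonal, Matrix.trace_diagonal]
  simp [sq]

private lemma srg_eig_classify {V : Type*} [Fintype V] [DecidableEq V] (Γ : SimpleGraph V)
    [DecidableRel Γ.Adj] {n k ℓ μ : ℕ} (h : Γ.IsSRGWith n k ℓ μ)
    (hA : (Γ.adjMatrix ℝ).IsHermitian) (i : V) :
    hA.eigenvalues i = (k:ℝ) ∨
      (hA.eigenvalues i)^2 - ((ℓ:ℝ) - μ)*(hA.eigenvalues i) - ((k:ℝ) - μ) = 0 := by
  set t := hA.eigenvalues i with ht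
  set v : V → ℝ := ⇑(hA.eigenvectorBasis i) with hv
  have hAv : Γ.adjMatrix ℝ *ᵥ v = t • v := hA.mulVec_eigenvectorBasis i
  have hvne : v ≠ 0 := by
    intro h0
    have hbne : hA.eigenvectorBasis i ≠ 0 := hA.eigenvectorBasis.toBasis.ne_zero i
    apply hbne
    ext x
    exact congrFun h0 x
  have hsum : ∑ x, (Γ.adjMatrix ℝ *ᵥ v) x = (k:ℝ) * ∑ x, v x := by
    calc ∑ x, (Γ.adjMatrix ℝ *ᵥ v) x = (fun _ => (1:ℝ)) ⬝ᵥ (Γ.adjMatrix ℝ *ᵥ v) := by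
          simp [dotProduct]
      _ = ((fun _ => (1:ℝ)) ᵥ* Γ.adjMatrix ℝ) ⬝ᵥ v := (Matrix.dotProduct_mulVec _ _ _)
      _ = (fun _ => (k:ℝ)) ⬝ᵥ v := by
          congr 1
          funext y
          rw [Γ.adjMatrix_vecMul_apply]
          simp [h.regular y]
      _ = (k:ℝ) * ∑ x, v x := by simp [dotProduct, Finset.mul_sum]
  rw [hAv] at hsum
  simp only [Pi.smul_apply, smul_eq_mul, ← Finset.mul_sum] at hsum
  by_cases hS : ∑ x, v x = 0
  · right
    obtain ⟨x, hx⟩ : ∃ x, v x ≠ 0 := by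
      by_contra hall
      push_neg at hall
      exact hvne (funext hall)
    have hCv : (Γᶜ.adjMatrix ℝ *ᵥ v) x = -(v x) - t * (v x) := by
      rw [Γᶜ.adjMatrix_mulVec_apply]
      have hset : Γᶜ.neighborFinset x = univ \ insert x (Γ.neighborFinset x) := by
        ext u
        simp only [mem_neighborFinset, compl_adj, mem_sdiff, mem_univ, true_and, mem_insert,
          not_or]
        constructor
        · rintro ⟨hne, hna⟩; exact ⟨fun hh => hne hh.symm, fun hh => hna hh⟩
        · rintro ⟨hne, hna⟩; exact ⟨fun hh => hne hh.symm, hna⟩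
      rw [hset, Finset.sum_sdiff_eq_sub (Finset.subset_univ _), hS,
        Finset.sum_insert (Γ.notMem_neighborFinset_self x)]
      have h2 : ∑ u ∈ Γ.neighborFinset x, v u = (Γ.adjMatrix ℝ *ᵥ v) x :=
        (Γ.adjMatrix_mulVec_apply _ _).symm
      rw [h2, hAv]
      simp
      ring
    have hmx : Γ.adjMatrix ℝ ^ 2 = (k:ℝ) • (1 : Matrix V V ℝ) + (ℓ:ℝ) • Γ.adjMatrix ℝ
        + (μ:ℝ) • Γᶜ.adjMatrix ℝ := by
      rw [h.matrix_eq]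
      simp only [Nat.cast_smul_eq_nsmul]
    have happ := congrFun (congrArg (fun M => M *ᵥ v) hmx) x
    simp only [pow_two, ← Matrix.mulVec_mulVec, hAv, Matrix.mulVec_smul, Matrix.add_mulVec,
      Matrix.smul_mulVec, Matrix.one_mulVec, Pi.add_apply, Pi.smul_apply, smul_eq_mul] at happ
    rw [hCv] at happ
    have hfac : (t^2 - ((ℓ:ℝ) - μ)*t - ((k:ℝ) - μ)) * v x = 0 := by linear_combination happ
    rcases mul_eq_zero.mp hfac with h' | h'
    · exact h'
    · exact absurd h' hx
  · left
    exact mul_right_cancel₀ hS hsum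

private lemma sum_split3 {V : Type*} [Fintype V] [DecidableEq V] (E : V → ℝ) (x y z : ℝ)
    (hxy : x ≠ y) (hxz : x ≠ z) (hyz : y ≠ z)
    (hcl : ∀ i, E i = x ∨ E i = y ∨ E i = z) :
    ∃ m f g : ℕ, ((m:ℝ) + f + g = (Fintype.card V : ℝ)) ∧
      (∀ F : ℝ → ℝ, ∑ i, F (E i) = m * F x + f * F y + g * F z) := by
  classical
  refine ⟨(univ.filter (fun i => E i = x)).card, (univ.filter (fun i => E i = y)).card,
    (univ.filter (fun i => E i = z)).card, ?_, ?_⟩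
  case refine_2 =>
    intro F
    have key : ∀ (w : ℝ) (s : Finset V), (∀ i ∈ s, E i = w) →
        ∑ i ∈ s, F (E i) = s.card * F w := by
      intro w s hs
      rw [Finset.sum_congr rfl (fun i hi => by rw [hs i hi]), Finset.sum_const, nsmul_eq_mul]
    have e1 : (univ.filter (fun i => ¬ E i = x)).filter (fun i => E i = y)
        = univ.filter (fun i => E i = y) := by
      rw [Finset.filter_filter]
      ext i
      simp only [Finset.mem_filter, Finset.mem_univ, true_and]
      exact ⟨fun h => h.2, fun h => ⟨fun hx => hxy (hx ▸ h ▸ rfl), h⟩⟩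
    have e2 : (univ.filter (fun i => ¬ E i = x)).filter (fun i => ¬ E i = y)
        = univ.filter (fun i => E i = z) := by
      rw [Finset.filter_filter]
      ext i
      simp only [Finset.mem_filter, Finset.mem_univ, true_and]
      constructor
      · rintro ⟨hnx, hny⟩
        rcases hcl i with h | h | h
        · exact absurd h hnx
        · exact absurd h hny
        · exact h
      · intro hz
        exact ⟨fun hx => hxz (hx ▸ hz ▸ rfl), fun hy => hyz (hy ▸ hz ▸ rfl)⟩
    rw [← Finset.sum_filter_add_sum_filter_not univ (fun i => E i = x) (fun i => F (E i)),
      ← Finset.sum_filter_add_sum_filter_not (univ.filter (fun i => ¬ E i = x))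
        (fun i => E i = y) (fun i => F (E i)), e1, e2,
      key x _ (fun i hi => (Finset.mem_filter.mp hi).2),
      key y _ (fun i hi => (Finset.mem_filter.mp hi).2),
      key z _ (fun i hi => (Finset.mem_filter.mp hi).2), add_assoc]
  case refine_1 =>
    classical
    rw [← Finset.card_univ]
    rw [← Finset.card_filter_add_card_filter_not (s := univ) (p := fun i => E i = x)]
    rw [← Finset.card_filter_add_card_filter_not
      (s := univ.filter (fun i => ¬ E i = x)) (p := fun i => E i = y)]
    have e1 : (univ.filter (fun i => ¬ E i = x)).filter (fun i => E i = y)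
        = univ.filter (fun i => E i = y) := by
      rw [Finset.filter_filter]
      ext i
      simp only [Finset.mem_filter, Finset.mem_univ, true_and]
      exact ⟨fun h => h.2, fun h => ⟨fun hx => hxy (hx ▸ h ▸ rfl), h⟩⟩
    have e2 : (univ.filter (fun i => ¬ E i = x)).filter (fun i => ¬ E i = y)
        = univ.filter (fun i => E i = z) := by
      rw [Finset.filter_filter]
      ext i
      simp only [Finset.mem_filter, Finset.mem_univ, true_and]
      constructor
      · rintro ⟨hnx, hny⟩
        rcases hcl i with h | h | h
        · exact absurd h hnx
        · exact absurd h hny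
        · exact h
      · intro hz
        exact ⟨fun hx => hxz (hx ▸ hz ▸ rfl), fun hy => hyz (hy ▸ hz ▸ rfl)⟩
    rw [e1, e2]
    push_cast
    ring

private lemma srg_arith (K' kk mu R S : ℝ) (hK' : 3*(R*S) < K') (hkk : 3*(R*S) < kk)
    (hmu1 : 1 ≤ mu) (hR1 : 1 ≤ R) (hS1 : 1 ≤ S) (hRS : R*S = kk - mu)
    (hmain : K' * mu = kk * ((R+1)*(S-1))) : False := by
  have hRS1 : (1:ℝ) ≤ R*S := by nlinarith
  have hK'pos : 0 < K' := by linarith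
  have hkpos : 0 < kk := by linarith
  have hMu : 2*(R*S) < mu := by linarith
  have hstep1 : (R+1)*(S-1) ≤ 2*(R*S) - 2 := by
    nlinarith [mul_nonneg (by linarith : (0:ℝ) ≤ R-1) (by linarith : (0:ℝ) ≤ S+1)]
  have c1 : K' * (2*(R*S)) < K' * mu := mul_lt_mul_of_pos_left hMu hK'pos
  have c2 : kk * ((R+1)*(S-1)) ≤ kk * (2*(R*S)-2) := mul_le_mul_of_nonneg_left hstep1 hkpos.le
  have hK'k : K' < kk := by nlinarith [c1, c2, hmain, hRS1, hkpos]
  have hkMu' : kk * (K' - (S-1)*(R+1)) = K' * (R*S) := by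
    linear_combination hmain - K' * hRS
  have hMu'big : R*S < K' - (S-1)*(R+1) := by nlinarith [hstep1]
  have d1 : K' * (R*S) < kk * (R*S) := mul_lt_mul_of_pos_right hK'k (by linarith)
  have d2 : kk * (R*S) < kk * (K' - (S-1)*(R+1)) := mul_lt_mul_of_pos_left hMu'big hkpos
  linarith

private lemma conf_arith (a kZ mZ : ℤ) (h1 : 1 ≤ mZ) (h2 : mZ < kZ) (h3 : a ≤ kZ - 3)
    (heq : a^2 - a*kZ + a - 2*mZ = 0) (h4 : 2*kZ < 3*mZ) : False := by
  rcases lt_trichotomy a 0 with hn | h0 | hp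
  · rcases eq_or_lt_of_le (by omega : a ≤ -1) with he | hl
    · rw [he] at heq
      norm_num at heq
      omega
    · have ha2 : a ≤ -2 := by omega
      have hint1 : (0:ℤ) ≤ (-a-2)*(-a-1) := mul_nonneg (by omega) (by omega)
      have hint2 : 2*kZ ≤ (-a)*kZ :=
        mul_le_mul_of_nonneg_right (by omega : (2:ℤ) ≤ -a) (by omega : (0:ℤ) ≤ kZ)
      nlinarith [hint1, hint2]
  · rw [h0] at heq
    norm_num at heq
    omega
  · have hint : a*(a+1-kZ) ≤ a*(-2) :=
      mul_le_mul_of_nonneg_left (by omega : a+1-kZ ≤ -2) (by omega : (0:ℤ) ≤ a)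
    nlinarith [hint]

set_option maxHeartbeats 2000000 in
theorem stmt15 {V : Type*} [Fintype V] (Γ : SimpleGraph V)
    [DecidableRel Γ.Adj] (n k ℓ μ : ℕ)
    (h : Γ.IsSRGWith n k ℓ μ) (hμ : 0 < μ) (hk : μ < k) :
    min (k : ℝ) ((n : ℝ) - k - 1) / 3 ≤ (k : ℝ) - μ := by
  classical
  by_contra hcon
  push_neg at hcon
  have hkμ1 : (1:ℝ) ≤ (k:ℝ) - (μ:ℝ) := by
    have : (μ:ℝ) + 1 ≤ (k:ℝ) := by exact_mod_cast hk
    linarith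
  have hμ1 : (1:ℝ) ≤ (μ:ℝ) := by exact_mod_cast hμ
  have h3k : 3 * ((k:ℝ) - μ) < (k:ℝ) := by
    have := min_le_left (k : ℝ) ((n : ℝ) - k - 1)
    linarith
  have h3k' : 3 * ((k:ℝ) - μ) < (n:ℝ) - k - 1 := by
    have := min_le_right (k : ℝ) ((n : ℝ) - k - 1)
    linarith
  have hnk2 : k + 2 ≤ n := by
    have : (k:ℝ) + 2 ≤ (n:ℝ) := by linarith
    exact_mod_cast this
  have hn0 : 0 < n := by omega
  have hpe := h.param_eq Γ hn0
  have hℓk : ℓ + 2 ≤ k := by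
    by_contra hc
    push_neg at hc
    have h0 : k - ℓ - 1 = 0 := by omega
    rw [h0, Nat.mul_zero] at hpe
    have : 0 < (n - k - 1) * μ := Nat.mul_pos (by omega) hμ
    omega
  have hId : (k:ℝ) * ((k:ℝ) - ℓ - 1) = ((n:ℝ) - k - 1) * μ := by
    have c1 : ((k - ℓ - 1 : ℕ) : ℝ) = (k:ℝ) - ℓ - 1 := by
      rw [Nat.sub_sub, Nat.cast_sub (by omega : ℓ + 1 ≤ k)]
      push_cast
      ring
    have c2 : ((n - k - 1 : ℕ) : ℝ) = (n:ℝ) - k - 1 := by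
      rw [Nat.sub_sub, Nat.cast_sub (by omega : k + 1 ≤ n)]
      push_cast
      ring
    rw [← c1, ← c2, ← Nat.cast_mul, ← Nat.cast_mul, hpe]
  set aZ : ℤ := (ℓ:ℤ) - (μ:ℤ) with haZ
  have hkμZ : (1:ℤ) ≤ (k:ℤ) - (μ:ℤ) := by
    have : (μ:ℤ) < (k:ℤ) := by exact_mod_cast hk
    omega
  by_cases hsqr : IsSquare (aZ^2 + 4*((k:ℤ) - μ))
  · -- rational (integer eigenvalue) case
    obtain ⟨d0, hd0⟩ := hsqr
    set d : ℤ := (d0.natAbs : ℤ) with hd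
    have hdnn : 0 ≤ d := Int.natCast_nonneg _
    have hdd : d * d = aZ^2 + 4*((k:ℤ) - μ) := by
      rw [hd, Int.natAbs_mul_self', ← hd0]
    have heven : Even (d - aZ) := by
      have h1 : Even (d*d - aZ*aZ) := ⟨2*((k:ℤ)-μ), by linarith [hdd]⟩
      have h2 := Int.even_sub.mp h1
      rw [Int.even_mul, or_self, Int.even_mul, or_self] at h2
      exact Int.even_sub.mpr h2
    obtain ⟨σ0, hσ0⟩ := heven
    set r : ℤ := aZ + σ0 with hr
    have hdiff : r - σ0 = aZ := by omega
    have hsumd : r + σ0 = d := by omega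
    have h4 : (4:ℤ) * (r * σ0) = 4 * ((k:ℤ) - μ) := by
      have hdd2 : (r + σ0) * (r + σ0) = (r - σ0)^2 + 4*((k:ℤ) - μ) := by
        rw [hsumd, hdiff]; exact hdd
      linear_combination hdd2
    have hprod : r * σ0 = (k:ℤ) - μ := by linarith
    have hdpos : 1 ≤ d := by
      rcases eq_or_lt_of_le hdnn with he | hl
      · exfalso
        rw [← he] at hdd
        have h5 : aZ^2 ≥ 0 := sq_nonneg aZ
        linarith [hdd]
      · omega
    have hrσpos : 1 ≤ r ∧ 1 ≤ σ0 := by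
      rcases le_or_gt r 0 with h1 | h1
      · rcases le_or_gt σ0 0 with h2 | h2
        · omega
        · have : r * σ0 ≤ 0 := mul_nonpos_iff.mpr (Or.inr ⟨h1, h2.le⟩)
          linarith
      · rcases le_or_gt σ0 0 with h2 | h2
        · have : r * σ0 ≤ 0 := mul_nonpos_iff.mpr (Or.inl ⟨h1.le, h2⟩)
          linarith
        · omega
    have hRS : (r:ℝ) * (σ0:ℝ) = (k:ℝ) - μ := by exact_mod_cast hprod
    have hRmS : (r:ℝ) - (σ0:ℝ) = (ℓ:ℝ) - μ := by
      have h5 : ((r:ℤ):ℝ) - ((σ0:ℤ):ℝ) = ((aZ:ℤ):ℝ) := by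
        rw [← Int.cast_sub, hdiff]
      rw [haZ] at h5
      push_cast at h5
      push_cast
      linarith
    have hR1 : (1:ℝ) ≤ (r:ℝ) := by exact_mod_cast hrσpos.1
    have hS1 : (1:ℝ) ≤ (σ0:ℝ) := by exact_mod_cast hrσpos.2
    have hfacRS : (k:ℝ) - ℓ - 1 = ((r:ℝ)+1)*((σ0:ℝ)-1) := by linear_combination hRmS - hRS
    have hmain : ((n:ℝ)-k-1) * μ = (k:ℝ) * (((r:ℝ)+1)*((σ0:ℝ)-1)) := by rw [← hId, hfacRS]
    exact srg_arith ((n:ℝ)-k-1) (k:ℝ) (μ:ℝ) (r:ℝ) (σ0:ℝ)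
      (by linarith [hRS]) (by linarith [hRS]) hμ1 hR1 hS1 hRS hmain
  · -- irrational case: conference-type graph
    set A := Γ.adjMatrix ℝ with hAdef
    have hA : A.IsHermitian := by
      show Aᴴ = A
      rw [Matrix.conjTranspose_eq_transpose_of_trivial]
      exact Γ.isSymm_adjMatrix
    set Ev := hA.eigenvalues with hEv
    have hsum0 : ∑ i, Ev i = 0 := by
      rw [hEv, ← trace_eq_sum_eigs A hA, hAdef]
      exact Γ.trace_adjMatrix (α := ℝ)
    have hmx : A ^ 2 = (k:ℝ) • (1 : Matrix V V ℝ) + (ℓ:ℝ) • A + (μ:ℝ) • Γᶜ.adjMatrix ℝ := by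
      rw [hAdef, h.matrix_eq]
      simp only [Nat.cast_smul_eq_nsmul]
    have htr2 : ∑ i, (Ev i)^2 = (n:ℝ) * k := by
      rw [hEv, ← trace_sq_eq_sum_eigs A hA, ← pow_two, hmx, Matrix.trace_add, Matrix.trace_add,
        Matrix.trace_smul, Matrix.trace_smul, Matrix.trace_smul, Matrix.trace_one]
      rw [hAdef, Γ.trace_adjMatrix (α := ℝ), Γᶜ.trace_adjMatrix (α := ℝ), h.card]
      simp
      ring
    set a : ℝ := (ℓ:ℝ) - μ with ha
    set Dr : ℝ := a^2 + 4*((k:ℝ) - μ) with hDr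
    have hDpos : 0 < Dr := by
      have h5 := sq_nonneg a
      rw [hDr]
      linarith
    set sq0 : ℝ := Real.sqrt Dr with hsq0
    have hsqsq : sq0^2 = Dr := Real.sq_sqrt hDpos.le
    have hsqpos : 0 < sq0 := Real.sqrt_pos.mpr hDpos
    set rr : ℝ := (a + sq0)/2 with hrr
    set ss : ℝ := (a - sq0)/2 with hss
    have hrs_sum : rr + ss = a := by rw [hrr, hss]; ring
    have hrs_mul : rr * ss = -((k:ℝ)-μ) := by
      have e : rr*ss = (a^2 - sq0^2)/4 := by rw [hrr, hss]; ring
      rw [e, hsqsq, hDr]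
      ring
    have hrs_ne : rr ≠ ss := by
      intro he
      have h5 : rr - ss = sq0 := by rw [hrr, hss]; ring
      rw [he, sub_self] at h5
      linarith
    have hfact : ∀ t : ℝ, t^2 - a*t - ((k:ℝ)-μ) = (t - rr)*(t - ss) := by
      intro t
      linear_combination (-t) * hrs_sum - hrs_mul + (rr + ss) * hrs_sum - a * hrs_sum
    have hqk : ((k:ℝ) - rr) * ((k:ℝ) - ss) = (μ:ℝ) * n := by
      rw [← hfact, ha]
      linear_combination hId
    have hμn_pos : 0 < (μ:ℝ) * n := by
      have h5 : (1:ℝ) ≤ (n:ℝ) := by exact_mod_cast hn0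
      exact mul_pos (by linarith) (by linarith)
    have hkr : (k:ℝ) ≠ rr := by
      intro he
      rw [← he, sub_self, zero_mul] at hqk
      linarith
    have hks : (k:ℝ) ≠ ss := by
      intro he
      rw [← he, sub_self, mul_zero] at hqk
      linarith
    have hclass2 : ∀ i, Ev i = (k:ℝ) ∨ Ev i = rr ∨ Ev i = ss := by
      intro i
      rcases srg_eig_classify Γ h hA i with h' | h'
      · left; exact h'
      · right
        have h6 : (Ev i - rr) * (Ev i - ss) = 0 := by
          rw [← hfact, ha]
          linear_combination h'
        rcases mul_eq_zero.mp h6 with h'' | h''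
        · left; linarith [sub_eq_zero.mp h'']
        · right; linarith [sub_eq_zero.mp h'']
    obtain ⟨m, f, g, ecard0, hsplit⟩ := sum_split3 Ev (k:ℝ) rr ss hkr hks hrs_ne hclass2
    rw [h.card] at ecard0
    have ecard : (m:ℝ) + f + g = (n:ℝ) := ecard0
    have hlin : (m:ℝ)*k + f*rr + g*ss = 0 := by
      have h1 := hsplit (fun t => t)
      rw [hsum0] at h1
      linarith
    have hsq2 : (m:ℝ)*k^2 + f*rr^2 + g*ss^2 = (n:ℝ)*k := by
      have h1 := hsplit (fun t => t^2)
      rw [htr2] at h1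
      linarith
    have hfg : f = g := by
      by_contra hne
      have hfgR : ((f:ℚ) : ℝ) - ((g:ℚ) : ℝ) ≠ 0 := by
        intro h0
        apply hne
        have : (f:ℝ) = (g:ℝ) := by push_cast at h0 ⊢; linarith
        exact_mod_cast this
    -- the square root would be rational
      set qv : ℚ := (-(2*(m:ℚ)*k) - ((f:ℚ)+g)*((ℓ:ℚ)-μ)) / ((f:ℚ) - g) with hqv
      have hq_eq : (qv:ℝ) = sq0 := by
        rw [hqv]
        push_cast
        rw [div_eq_iff (by push_cast at hfgR ⊢; exact hfgR)]
        have hlin' := hlin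
        rw [hrr, hss, ha] at hlin'
        linear_combination (-2) * hlin'
      have hnonneg : (0:ℤ) ≤ aZ^2 + 4*((k:ℤ)-μ) := by
        have := sq_nonneg aZ
        linarith
      have hirr : Irrational (Real.sqrt ((aZ^2 + 4*((k:ℤ)-μ) : ℤ) : ℝ)) :=
        (irrational_sqrt_intCast_iff_of_nonneg hnonneg).mpr hsqr
      have hDZ : ((aZ^2 + 4*((k:ℤ)-μ) : ℤ) : ℝ) = Dr := by
        rw [haZ, hDr, ha]
        push_cast
        ring
      rw [hDZ, ← hsq0] at hirr
      exact hirr ⟨qv, hq_eq⟩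
    -- now f = g : conference situation
    have hsquares : rr^2 + ss^2 = a^2 + 2*((k:ℝ)-μ) := by
      have e : rr^2 + ss^2 = (a^2 + sq0^2)/2 := by rw [hrr, hss]; ring
      rw [e, hsqsq, hDr]
      ring
    have e1 : (m:ℝ)*k + g*a = 0 := by
      rw [hfg] at hlin
      linear_combination hlin - (g:ℝ) * hrs_sum
    have e2 : (m:ℝ)*k^2 + g*(a^2 + 2*((k:ℝ)-μ)) = (n:ℝ)*k := by
      rw [hfg] at hsq2
      rw [← hsquares]
      linear_combination hsq2
    have ecard2 : (m:ℝ) + 2*g = (n:ℝ) := by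
      rw [hfg] at ecard
      linarith
    have hkR1 : (1:ℝ) ≤ (k:ℝ) := by linarith
    have hfpos : (1:ℝ) ≤ (g:ℝ) := by
      rcases Nat.eq_zero_or_pos g with h0 | h0
      · exfalso
        rw [h0] at e1 ecard2
        push_cast at e1 ecard2
        have hmk : (m:ℝ)*k = 0 := by linarith
        rcases mul_eq_zero.mp hmk with h5 | h5
        · have : (n:ℝ) = 0 := by linarith
          have : (0:ℝ) < n := by exact_mod_cast hn0
          linarith
        · linarith
      · exact_mod_cast h0
    have key : (g:ℝ) * (a^2 - a*(k:ℝ) + a - 2*μ) = 0 := by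
      linear_combination e2 + (1 - (k:ℝ)) * e1 - (k:ℝ) * ecard2
    have keyR : a^2 - a*(k:ℝ) + a - 2*(μ:ℝ) = 0 := by
      rcases mul_eq_zero.mp key with h5 | h5
      · linarith
      · exact h5
    have haR : ((aZ:ℤ):ℝ) = a := by
      rw [haZ, ha]
      push_cast
      ring
    have keyZ : aZ^2 - aZ*(k:ℤ) + aZ - 2*(μ:ℤ) = 0 := by
      have h5 : ((aZ^2 - aZ*(k:ℤ) + aZ - 2*(μ:ℤ) : ℤ) : ℝ) = 0 := by
        push_cast
        rw [haR]
        linear_combination keyR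
      exact_mod_cast h5
    have hℓZ : aZ ≤ (k:ℤ) - 3 := by
      have h5 : (ℓ:ℤ) + 2 ≤ (k:ℤ) := by exact_mod_cast hℓk
      have h6 : (1:ℤ) ≤ (μ:ℤ) := by exact_mod_cast hμ
      omega
    have h2k3μ : 2*(k:ℤ) < 3*(μ:ℤ) := by
      have h5 : 2*(k:ℝ) < 3*(μ:ℝ) := by linarith
      exact_mod_cast h5
    exact conf_arith aZ (k:ℤ) (μ:ℤ) (by exact_mod_cast hμ) (by exact_mod_cast hk) hℓZ keyZ h2k3μ
end

section
/- Let Γ be a strongly regular graph on n vertices with μ > 0 and k > μ, and let f be a proper endomorphism of Γ of rank r. Then n − r ≥ 1 + √(n−1)/12. -/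
/-!
A proper endomorphism `f` of a finite graph is not injective, so `f u = f v` for some `u ≠ v`;
these are non-adjacent, and `f` maps both closed neighbourhoods into the closed neighbourhood of
`f u`. In a strongly regular graph the union of the two closed neighbourhoods has `2k - μ + 2`
vertices, so `n - r ≥ k - μ + 1`. On the other hand, with `m = n - k - 1`, the relation
`k (k - ℓ - 1) = m μ` together with `2μ ≤ k + ℓ` (there is an edge among the non-neighbours of a
vertex) gives `min k m < 3 (k - μ)` and `n - 1 ≤ (min k m)²`, so `√(n - 1) ≤ 3 (k - μ)`.
-/

open Finset

theorem Finset.card_image_univ_add_card_le {α β : Type*} [Fintype α] [DecidableEq α]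
    [DecidableEq β] (f : α → β) {s : Finset α} {t : Finset β} (hst : ∀ x ∈ s, f x ∈ t) :
    #(univ.image f) + #s ≤ Fintype.card α + #t := by
  have hcover : univ.image f ⊆ t ∪ (univ \ s).image f := by
    intro y hy
    obtain ⟨x, -, rfl⟩ := mem_image.1 hy
    by_cases hx : x ∈ s
    · exact mem_union_left _ (hst x hx)
    · exact mem_union_right _ (mem_image_of_mem f (by simpa using hx))
  have hcard := (card_le_card hcover).trans (card_union_le _ _)
  have hcompl := card_image_le (s := univ \ s) (f := f)
  rw [card_univ_sdiff] at hcompl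
  have := card_le_univ s
  omega

/-- With `m = n - k - 1` and `a = k - ℓ - 1`, the hypothesis `h` is the parameter relation of a
strongly regular graph. -/
theorem add_le_sq_of_mul_eq {k m a μ : ℕ} (h : k * a = m * μ) (hμ : 0 < μ) (hak : a < k)
    (ha : a + 1 ≤ 2 * (k - μ)) (hm : k - μ < m) : k + m ≤ (3 * (k - μ)) ^ 2 := by
  obtain ⟨t, rfl⟩ : ∃ t, k = μ + t := ⟨k - μ, by omega⟩
  rw [Nat.add_sub_cancel_left] at ha hm ⊢
  have hsplit : (μ + t) * m = (μ + t) * a + m * t := by rw [h]; ring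
  rcases le_total (μ + t) m with hkm | hmk
  · have hμa : μ ≤ a := Nat.le_of_mul_le_mul_left (by nlinarith) (by omega : 0 < m)
    calc μ + t + m ≤ (μ + t) * (a + 1) := by nlinarith
      _ ≤ (μ + t) * (μ + t) := Nat.mul_le_mul_left _ hak
      _ ≤ (3 * t) ^ 2 := by nlinarith
  · have hma : m ≤ a + t := Nat.le_of_mul_le_mul_left (by nlinarith) (by omega : 0 < μ + t)
    have ham : a < m := by
      by_contra! ham
      nlinarith
    calc μ + t + m ≤ m * t + m := by nlinarith
      _ ≤ m * m := by nlinarith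
      _ ≤ (3 * t) ^ 2 := by nlinarith

namespace SimpleGraph

variable {V W : Type*} {G : SimpleGraph V} {H : SimpleGraph W}

theorem Hom.apply_mem_insert_neighborFinset_of_apply_eq [DecidableEq V] [G.LocallyFinite]
    [DecidableEq W] [H.LocallyFinite] (f : G →g H) {u v : V} (huv : f u = f v) :
    ∀ x ∈ insert u (insert v (G.neighborFinset u ∪ G.neighborFinset v)),
      f x ∈ insert (f u) (H.neighborFinset (f u)) := by
  intro x hx
  simp only [mem_insert, mem_union, mem_neighborFinset] at hx ⊢
  rcases hx with rfl | rfl | hx | hx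
  · exact .inl rfl
  · exact .inl huv.symm
  · exact .inr (f.map_adj hx)
  · exact .inr (huv ▸ f.map_adj hx)

variable [Fintype V] [DecidableEq V] [DecidableRel G.Adj] {n k ℓ μ : ℕ}

theorem card_neighborFinset_inter (v w : V) :
    #(G.neighborFinset v ∩ G.neighborFinset w) = Fintype.card (G.commonNeighbors v w) := by
  rw [← Set.toFinset_card]
  congr 1
  ext x
  simp [mem_commonNeighbors]

namespace IsSRGWith

variable (h : G.IsSRGWith n k ℓ μ)
include h

theorem card_insert_insert_neighborFinset_union {u v : V} (hne : u ≠ v) (hadj : ¬G.Adj u v) :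
    #(insert u (insert v (G.neighborFinset u ∪ G.neighborFinset v))) = 2 * k - μ + 2 := by
  rw [card_insert_of_notMem, card_insert_of_notMem, h.card_neighborFinset_union_of_not_adj hne hadj]
  · simp [hadj]
  · simpa [hne, adj_comm] using hadj

theorem card_image_add_sub_lt {f : G →g G} {u v : V} (hne : u ≠ v) (huv : f u = f v) :
    #(univ.image f) + (k - μ) < n := by
  have hadj : ¬G.Adj u v := fun hadj => G.loopless.irrefl _ (huv ▸ f.map_adj hadj)
  have hμk : μ ≤ k := by
    rw [← h.of_not_adj hne hadj, ← h.regular u]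
    exact G.card_commonNeighbors_le_degree_left u v
  have := card_image_univ_add_card_le f (f.apply_mem_insert_neighborFinset_of_apply_eq huv)
  rw [h.card_insert_insert_neighborFinset_union hne hadj, h.card,
    card_insert_of_notMem (G.notMem_neighborFinset_self _), card_neighborFinset_eq_degree,
    h.regular] at this
  omega

theorem exists_adj_not_adj (hk : μ < k) {u v : V} (hne : u ≠ v) (hadj : ¬G.Adj u v) :
    ∃ w, G.Adj v w ∧ w ≠ u ∧ ¬G.Adj u w := by
  by_contra! hw
  have hsub : G.neighborFinset v ⊆ G.neighborFinset v ∩ G.neighborFinset u := by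
    intro w hvw
    rw [mem_neighborFinset] at hvw
    have hwu : w ≠ u := by rintro rfl; exact hadj hvw.symm
    simpa [hvw] using hw w hvw hwu
  have := card_le_card hsub
  rw [card_neighborFinset_eq_degree, h.regular v, card_neighborFinset_inter,
    h.of_not_adj hne.symm (fun h' => hadj h'.symm)] at this
  omega

theorem two_mul_le_add {u x y : V} (hxy : G.Adj x y) (hxu : x ≠ u) (hyu : y ≠ u)
    (hux : ¬G.Adj u x) (huy : ¬G.Adj u y) : 2 * μ ≤ k + ℓ := by
  set A := G.neighborFinset x ∩ G.neighborFinset u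
  set B := G.neighborFinset y ∩ G.neighborFinset u
  have hunion : #(A ∪ B) ≤ #(G.neighborFinset u) :=
    card_le_card (union_subset inter_subset_right inter_subset_right)
  have hinter : #(A ∩ B) ≤ #(G.neighborFinset x ∩ G.neighborFinset y) :=
    card_le_card (inter_subset_inter inter_subset_left inter_subset_left)
  have := card_union_add_card_inter A B
  simp only [A, B, card_neighborFinset_inter, card_neighborFinset_eq_degree, h.regular u,
    h.of_adj x y hxy, h.of_not_adj hxu (fun h' => hux h'.symm),
    h.of_not_adj hyu (fun h' => huy h'.symm)] at hunion hinter this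
  omega

theorem sub_one_le_sq (hμ : 0 < μ) (hk : μ < k) {u v : V} (hne : u ≠ v) (hadj : ¬G.Adj u v) :
    n - 1 ≤ (3 * (k - μ)) ^ 2 := by
  obtain ⟨w, hvw, hwu, huw⟩ := h.exists_adj_not_adj hk hne hadj
  have hedge := h.two_mul_le_add hvw hne.symm hwu hadj huw
  have hcard := card_le_univ (insert u (insert v (G.neighborFinset u ∪ G.neighborFinset v)))
  rw [h.card_insert_insert_neighborFinset_union hne hadj, h.card] at hcard
  have := add_le_sq_of_mul_eq (h.param_eq G (by omega)) hμ (by omega) (by omega) (by omega)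
  omega

end IsSRGWith

end SimpleGraph

theorem stmt17 {V : Type*} [Fintype V] [DecidableEq V] (Γ : SimpleGraph V)
    [DecidableRel Γ.Adj] (n k ℓ μ : ℕ)
    (h : Γ.IsSRGWith n k ℓ μ) (hμ : 0 < μ) (hk : μ < k)
    (f : Γ →g Γ) (hf : ¬ Function.Bijective f) (r : ℕ)
    (hr : (Finset.univ.image (f : V → V)).card = r) :
    1 + Real.sqrt ((n : ℝ) - 1) / 12 ≤ (n : ℝ) - r := by
  obtain ⟨u, v, huv, hne⟩ := Function.not_injective_iff.mp fun hinj =>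
    hf ⟨hinj, Finite.surjective_of_injective hinj⟩
  have hadj : ¬Γ.Adj u v := fun hadj => Γ.loopless.irrefl _ (huv ▸ f.map_adj hadj)
  have hgap : (r : ℝ) + (k - μ : ℕ) + 1 ≤ n := by
    exact_mod_cast hr ▸ h.card_image_add_sub_lt hne huv
  have hsq : (n : ℝ) - 1 ≤ (3 * (k - μ : ℕ)) ^ 2 := by
    have := h.sub_one_le_sq hμ hk hne hadj
    have : n ≤ (3 * (k - μ)) ^ 2 + 1 := by omega
    have : (n : ℝ) ≤ (3 * (k - μ : ℕ)) ^ 2 + 1 := by exact_mod_cast this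
    linarith
  have hsqrt := (Real.sqrt_le_left (by positivity)).2 hsq
  linarith
end
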